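/- arXiv:2408.09693 — 5 statements merged into one kernel-verified Lean document; each statement's English description precedes it below -/
import Mathlib

section
/- For every initial value γ₀ ≥ 0 there exists a unique continuously differentiable function γ⁰ : [0,∞) → ℝ with γ⁰(0) = γ₀ and (γ⁰)'(t) = f(γ⁰(t),0) for all t ≥ 0; this solution satisfies 0 ≤ γ⁰(t) ≤ max{γ∞⁰, γ₀} for all t ≥ 0, and γ⁰(t) → γ∞⁰ as t → ∞. -/
/-!
Write `γ ↦ f(γ, 0)` as `-a (γ - r) (γ - r')` with `a = 1/σ₁²` and roots `r' ≤ 0 ≤ r = γ∞⁰`.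
The deviation `δ = γ - r` then solves the Bernoulli equation `δ' = -a δ² - a (r - r') δ`, whose
solutions are `δ₀ E / D` with `E' = -a (r - r') E`, `D' = a δ₀ E` and `E(0) = D(0) = 1`. For
`γ₀ > r'` (or `r' = r ≤ γ₀`) one has `0 < E ≤ D` for `t ≥ 0`, so the solution is global, stays
between `γ₀` and `r`, and tends to `r`. Uniqueness is Lipschitz uniqueness on each `[0, T]`, where
both solutions have compact range.
-/

open Set Filter Topology

theorem ODE_solution_unique_Ici_of_locallyLipschitz {E : Type*} [NormedAddCommGroup E]
    [NormedSpace ℝ E] {F : E → E} (hF : LocallyLipschitz F) {g₁ g₂ : ℝ → E} {a : ℝ}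
    (h₁ : ∀ t ∈ Ici a, HasDerivWithinAt g₁ (F (g₁ t)) (Ici a) t)
    (h₂ : ∀ t ∈ Ici a, HasDerivWithinAt g₂ (F (g₂ t)) (Ici a) t)
    (ha : g₁ a = g₂ a) :
    EqOn g₁ g₂ (Ici a) := by
  intro T hT
  have hsub : Icc a T ⊆ Ici a := Icc_subset_Ici_self
  have hc₁ : ContinuousOn g₁ (Icc a T) := fun t ht ↦
    ((h₁ t (hsub ht)).continuousWithinAt).mono hsub
  have hc₂ : ContinuousOn g₂ (Icc a T) := fun t ht ↦
    ((h₂ t (hsub ht)).continuousWithinAt).mono hsub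
  set S := g₁ '' Icc a T ∪ g₂ '' Icc a T
  obtain ⟨K, hK⟩ := (hF.locallyLipschitzOn (s := S)).exists_lipschitzOnWith_of_compact
    ((isCompact_Icc.image_of_continuousOn hc₁).union (isCompact_Icc.image_of_continuousOn hc₂))
  refine ODE_solution_unique_of_mem_Icc_right (v := fun _ ↦ F) (s := fun _ ↦ S)
    (fun _ _ ↦ hK) hc₁ (fun t ht ↦ ?_) (fun t ht ↦ .inl ⟨t, Ico_subset_Icc_self ht, rfl⟩)
    hc₂ (fun t ht ↦ ?_) (fun t ht ↦ .inr ⟨t, Ico_subset_Icc_self ht, rfl⟩) ha ⟨hT, le_rfl⟩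
  · exact (h₁ t ht.1).mono (Ici_subset_Ici.2 ht.1)
  · exact (h₂ t ht.1).mono (Ici_subset_Ici.2 ht.1)

lemma add_mul_mem_uIcc {r δ x : ℝ} (hx : x ∈ Icc 0 1) : r + δ * x ∈ uIcc r (r + δ) := by
  rcases le_total 0 δ with hδ | hδ
  · exact Icc_subset_uIcc ⟨by nlinarith [hx.1], by nlinarith [hx.2]⟩
  · exact Icc_subset_uIcc' ⟨by nlinarith [hx.2], by nlinarith [hx.1]⟩

section Riccati

variable {a r r' γ₀ : ℝ}

theorem exists_riccati_solution_of_ratio {E D : ℝ → ℝ} (hE₀ : E 0 = 1) (hD₀ : D 0 = 1)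
    (hE : ∀ t, HasDerivAt E (-(a * (r - r')) * E t) t)
    (hD : ∀ t, HasDerivAt D (a * (γ₀ - r) * E t) t)
    (hE_pos : ∀ t, 0 < E t) (hED : ∀ t ∈ Ici (0 : ℝ), E t ≤ D t)
    (hlim : Tendsto (fun t ↦ (γ₀ - r) * E t / D t) atTop (𝓝 0)) :
    ∃ g : ℝ → ℝ, g 0 = γ₀ ∧
      (∀ t ∈ Ici (0 : ℝ), HasDerivWithinAt g (-a * (g t - r) * (g t - r')) (Ici 0) t) ∧
      (∀ t ∈ Ici (0 : ℝ), g t ∈ uIcc r γ₀) ∧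
      Tendsto g atTop (𝓝 r) := by
  have hD_pos : ∀ t ∈ Ici (0 : ℝ), 0 < D t := fun t ht ↦ (hE_pos t).trans_le (hED t ht)
  refine ⟨fun t ↦ r + (γ₀ - r) * E t / D t, by simp [hE₀, hD₀], fun t ht ↦ ?_,
    fun t ht ↦ ?_, by simpa using tendsto_const_nhds.add hlim⟩
  · have hDt := (hD_pos t ht).ne'
    have hg := (((hE t).const_mul (γ₀ - r)).div (hD t) hDt).const_add r
    refine (hg.congr_deriv ?_).hasDerivWithinAt
    field_simp
    ring
  · have hx : E t / D t ∈ Icc 0 1 :=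
      ⟨div_nonneg (hE_pos t).le (hD_pos t ht).le, div_le_one_of_le₀ (hED t ht) (hD_pos t ht).le⟩
    simpa [mul_div_assoc] using add_mul_mem_uIcc (r := r) (δ := γ₀ - r) hx

theorem exists_riccati_solution_of_lt (ha : 0 < a) (hr : r' < r) (hγ₀ : r' < γ₀) :
    ∃ g : ℝ → ℝ, g 0 = γ₀ ∧
      (∀ t ∈ Ici (0 : ℝ), HasDerivWithinAt g (-a * (g t - r) * (g t - r')) (Ici 0) t) ∧
      (∀ t ∈ Ici (0 : ℝ), g t ∈ uIcc r γ₀) ∧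
      Tendsto g atTop (𝓝 r) := by
  set k := a * (r - r')
  set c := (γ₀ - r') / (r - r')
  have hk : 0 < k := mul_pos ha (sub_pos.2 hr)
  have hc : 0 < c := div_pos (sub_pos.2 hγ₀) (sub_pos.2 hr)
  have hE (t : ℝ) : HasDerivAt (fun t ↦ Real.exp (-k * t)) (-k * Real.exp (-k * t)) t := by
    simpa [mul_comm] using ((hasDerivAt_id t).const_mul (-k)).exp
  refine exists_riccati_solution_of_ratio (E := fun t ↦ Real.exp (-k * t))
    (D := fun t ↦ Real.exp (-k * t) + c * (1 - Real.exp (-k * t))) (by simp) (by simp) hE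
    (fun t ↦ ((hE t).add (((hE t).const_sub 1).const_mul c)).congr_deriv ?_)
    (fun t ↦ Real.exp_pos _) (fun t ht ↦ ?_) ?_
  · have : r - r' ≠ 0 := (sub_pos.2 hr).ne'
    simp only [k, c]
    field_simp
    ring
  · have : Real.exp (-k * t) ≤ 1 := Real.exp_le_one_iff.2 (by nlinarith [mem_Ici.1 ht])
    nlinarith
  · have hE_lim : Tendsto (fun t ↦ Real.exp (-k * t)) atTop (𝓝 0) :=
      Real.tendsto_exp_atBot.comp (tendsto_id.const_mul_atTop_of_neg (neg_neg_of_pos hk))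
    have := (hE_lim.const_mul (γ₀ - r)).div (hE_lim.add ((hE_lim.const_sub 1).const_mul c))
      (by simpa using hc.ne')
    rwa [mul_zero, zero_div] at this

theorem exists_riccati_solution_of_eq (ha : 0 < a) (hγ₀ : r ≤ γ₀) :
    ∃ g : ℝ → ℝ, g 0 = γ₀ ∧
      (∀ t ∈ Ici (0 : ℝ), HasDerivWithinAt g (-a * (g t - r) * (g t - r)) (Ici 0) t) ∧
      (∀ t ∈ Ici (0 : ℝ), g t ∈ uIcc r γ₀) ∧
      Tendsto g atTop (𝓝 r) := by
  have hδ : 0 ≤ γ₀ - r := sub_nonneg.2 hγ₀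
  refine exists_riccati_solution_of_ratio (E := fun _ ↦ 1) (D := fun t ↦ 1 + a * (γ₀ - r) * t)
    (by simp) (by simp) (fun t ↦ by simpa using hasDerivAt_const t (1 : ℝ))
    (fun t ↦ by simpa using ((hasDerivAt_id t).const_mul (a * (γ₀ - r))).const_add 1)
    (fun _ ↦ one_pos) (fun t ht ↦ by have := mem_Ici.1 ht; simp; positivity) ?_
  rcases hδ.eq_or_lt with h | h
  · simp [← h]
  · simpa using tendsto_const_nhds.div_atTop (tendsto_atTop_add_const_left _ 1
      (tendsto_id.const_mul_atTop (mul_pos ha h)))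

theorem exists_riccati_solution (ha : 0 < a) (hr : r' ≤ r) (hγ₀ : r' < γ₀ ∨ r ≤ γ₀) :
    ∃ g : ℝ → ℝ, g 0 = γ₀ ∧
      (∀ t ∈ Ici (0 : ℝ), HasDerivWithinAt g (-a * (g t - r) * (g t - r')) (Ici 0) t) ∧
      (∀ t ∈ Ici (0 : ℝ), g t ∈ uIcc r γ₀) ∧
      Tendsto g atTop (𝓝 r) := by
  rcases hr.lt_or_eq with hlt | rfl
  · exact exists_riccati_solution_of_lt ha hlt (hγ₀.elim id hlt.trans_le)
  · exact exists_riccati_solution_of_eq ha (hγ₀.elim le_of_lt id)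

end Riccati

theorem stmt_1_general (σ₁ σ₂ lam : ℝ) (hσ₁ : 0 < σ₁) (hlam : 0 ≤ lam)
    (f : ℝ → ℝ → ℝ)
    (hf : ∀ γ h : ℝ, f γ h = -(1 / σ₁ ^ 2 + h) * γ ^ 2 - 2 * lam * γ + σ₂ ^ 2)
    (γinf : ℝ)
    (hγinf : γinf = -lam * σ₁ ^ 2 + Real.sqrt (lam ^ 2 * σ₁ ^ 4 + σ₁ ^ 2 * σ₂ ^ 2))
    (γ₀ : ℝ) (hγ₀ : 0 ≤ γ₀) :
    (∃ g : ℝ → ℝ,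
      (g 0 = γ₀ ∧ ∀ t ∈ Set.Ici (0 : ℝ), HasDerivWithinAt g (f (g t) 0) (Set.Ici 0) t) ∧
      (∀ t ∈ Set.Ici (0 : ℝ), 0 ≤ g t ∧ g t ≤ max γinf γ₀) ∧
      Filter.Tendsto g Filter.atTop (nhds γinf)) ∧
    (∀ g₁ g₂ : ℝ → ℝ,
      (g₁ 0 = γ₀ ∧ ∀ t ∈ Set.Ici (0 : ℝ), HasDerivWithinAt g₁ (f (g₁ t) 0) (Set.Ici 0) t) →
      (g₂ 0 = γ₀ ∧ ∀ t ∈ Set.Ici (0 : ℝ), HasDerivWithinAt g₂ (f (g₂ t) 0) (Set.Ici 0) t) →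
      Set.EqOn g₁ g₂ (Set.Ici 0)) := by
  set s := √(lam ^ 2 * σ₁ ^ 4 + σ₁ ^ 2 * σ₂ ^ 2)
  have hs_sq : s ^ 2 = lam ^ 2 * σ₁ ^ 4 + σ₁ ^ 2 * σ₂ ^ 2 := Real.sq_sqrt (by positivity)
  have hs_ge : lam * σ₁ ^ 2 ≤ s := Real.le_sqrt_of_sq_le (by nlinarith [sq_nonneg (σ₁ * σ₂)])
  have hlamσ : 0 ≤ lam * σ₁ ^ 2 := by positivity
  have hF (x : ℝ) : f x 0 = -(1 / σ₁ ^ 2) * (x - γinf) * (x - (-lam * σ₁ ^ 2 - s)) := by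
    rw [hf, hγinf]
    field_simp
    linear_combination -hs_sq
  obtain ⟨g, hg₀, hg, hg_mem, hg_lim⟩ := exists_riccati_solution (r := γinf) (r' := -lam * σ₁ ^ 2 - s) (γ₀ := γ₀)
    (by positivity : 0 < 1 / σ₁ ^ 2) (by linarith) (by by_contra! h; linarith [h.1, h.2])
  refine ⟨⟨g, ⟨hg₀, fun t ht ↦ hF (g t) ▸ hg t ht⟩, fun t ht ↦ ?_, hg_lim⟩, ?_⟩
  · exact ⟨le_trans (le_inf (by linarith) hγ₀) (hg_mem t ht).1, (hg_mem t ht).2⟩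
  · rintro g₁ g₂ ⟨hg₁₀, hg₁⟩ ⟨hg₂₀, hg₂⟩
    have hF_lip : LocallyLipschitz fun x ↦ f x 0 := by
      have : ContDiff ℝ 1 fun x ↦ f x 0 := by simp_rw [hf]; fun_prop
      exact this.locallyLipschitz
    exact ODE_solution_unique_Ici_of_locallyLipschitz hF_lip hg₁ hg₂ (hg₁₀.trans hg₂₀.symm)

/-- Existence, uniqueness, bounds and long-time convergence for the
uncontrolled conditional variance ODE γ' = f(γ,0), γ(0) = γ₀ ≥ 0. -/
theorem stmt_1 (σ₁ σ₂ lam : ℝ) (hσ₁ : 0 < σ₁) (hσ₂ : 0 ≤ σ₂) (hlam : 0 ≤ lam)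
    (f : ℝ → ℝ → ℝ)
    (hf : ∀ γ h : ℝ, f γ h = -(1 / σ₁ ^ 2 + h) * γ ^ 2 - 2 * lam * γ + σ₂ ^ 2)
    (γinf : ℝ)
    (hγinf : γinf = -lam * σ₁ ^ 2 + Real.sqrt (lam ^ 2 * σ₁ ^ 4 + σ₁ ^ 2 * σ₂ ^ 2))
    (γ₀ : ℝ) (hγ₀ : 0 ≤ γ₀) :
    (∃ g : ℝ → ℝ,
      (g 0 = γ₀ ∧ ∀ t ∈ Set.Ici (0 : ℝ), HasDerivWithinAt g (f (g t) 0) (Set.Ici 0) t) ∧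
      (∀ t ∈ Set.Ici (0 : ℝ), 0 ≤ g t ∧ g t ≤ max γinf γ₀) ∧
      Filter.Tendsto g Filter.atTop (nhds γinf)) ∧
    (∀ g₁ g₂ : ℝ → ℝ,
      (g₁ 0 = γ₀ ∧ ∀ t ∈ Set.Ici (0 : ℝ), HasDerivWithinAt g₁ (f (g₁ t) 0) (Set.Ici 0) t) →
      (g₂ 0 = γ₀ ∧ ∀ t ∈ Set.Ici (0 : ℝ), HasDerivWithinAt g₂ (f (g₂ t) 0) (Set.Ici 0) t) →
      Set.EqOn g₁ g₂ (Set.Ici 0)) :=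
  stmt_1_general σ₁ σ₂ lam hσ₁ hlam f hf γinf hγinf γ₀ hγ₀
end

section
/- Let h : [0,∞) → [0,∞) be Borel measurable and locally integrable and let γ₀ ≥ 0. Then there exists an absolutely continuous function γ^h : [0,∞) → ℝ with γ^h(0) = γ₀ satisfying (γ^h)'(t) = f(γ^h(t), h(t)) for almost every t ≥ 0, and every such solution satisfies 0 ≤ γ^h(t) ≤ γ⁰(t) ≤ max{γ∞⁰, γ₀} for all t ≥ 0, where γ⁰ is the solution of the uncontrolled equation (γ⁰)'(t) = f(γ⁰(t),0) with γ⁰(0) = γ₀. -/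
/-!
Clipping the state to `[0, M]`, `M = max γ∞⁰ γ₀`, makes `f(·, h(t))` Lipschitz with the locally
integrable modulus `2M(σ̄₁² + h) + 2λ`. For such fields a contraction on every interval where the
modulus has integral `≤ 1/2`, a continuation argument and Gronwall's lemma give a unique global
solution. A one-sided Gronwall argument (a comparison principle) keeps the clipped solution in
`[0, M]`, because `f(0, h) = σ₂² ≥ 0` and `f(γ, h) ≤ 0` for `γ ≥ γ∞⁰`; hence it solves the
unclipped equation. The same principle gives the bounds for any solution: `γ^h ≥ 0` because
`f(γ, h) ≥ B(σ̄₁² + h)γ` for `-B ≤ γ ≤ 0`, `γ^h ≤ γ⁰` because `f(γ, h) ≤ f(γ', 0)` for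
`0 ≤ γ' ≤ γ`, and `γ⁰ ≤ M` as above.
-/

open Set MeasureTheory intervalIntegral

variable {K u g G : ℝ → ℝ}

theorem MeasureTheory.LocallyIntegrable.intervalIntegrable (hK : LocallyIntegrable K)
    (a b : ℝ) : IntervalIntegrable K volume a b :=
  (hK.integrableOn_isCompact isCompact_uIcc).intervalIntegrable

theorem MeasureTheory.LocallyIntegrable.exists_integral_le (hK : LocallyIntegrable K)
    (x : ℝ) {ε : ℝ} (hε : 0 < ε) :
    ∃ δ > 0, ∀ a ∈ Metric.ball x δ, ∀ b ∈ Metric.ball x δ, ∫ s in a..b, K s ≤ ε := by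
  obtain ⟨δ, hδ, hΛ⟩ := Metric.continuousAt_iff.mp
    ((continuous_primitive hK.intervalIntegrable 0).continuousAt (x := x)) (ε / 2) (half_pos hε)
  refine ⟨δ, hδ, fun a ha b hb => ?_⟩
  rw [← integral_interval_sub_left (hK.intervalIntegrable 0 b) (hK.intervalIntegrable 0 a)]
  have hb' := hΛ hb
  have ha' := hΛ ha
  rw [Real.dist_eq] at ha' hb'
  linarith [abs_lt.mp ha', abs_lt.mp hb']

theorem MeasureTheory.LocallyIntegrable.intervalIntegrable_mul_continuousOn
    (hK : LocallyIntegrable K) {d p q : ℝ} (hu : ContinuousOn u (Icc 0 d)) (hp : p ∈ Icc 0 d)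
    (hq : q ∈ Icc 0 d) : IntervalIntegrable (fun s => K s * u s) volume p q :=
  (hK.intervalIntegrable p q).mul_continuousOn (hu.mono (uIcc_subset_Icc hp hq))

theorem MeasureTheory.LocallyIntegrable.continuousOn_primitive_mul (hK : LocallyIntegrable K)
    {d : ℝ} (hd : 0 ≤ d) (hu : ContinuousOn u (Icc 0 d)) :
    ContinuousOn (fun t => ∫ s in 0..t, K s * u s) (Icc 0 d) := by
  rw [← uIcc_of_le hd] at hu ⊢
  exact continuousOn_primitive_interval
    ((hK.integrableOn_isCompact isCompact_uIcc).mul_continuousOn hu isCompact_uIcc)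

theorem eqOn_zero_of_le_integral_mul (hK : LocallyIntegrable K) (hK0 : ∀ s, 0 ≤ K s) {d : ℝ}
    (hu : ContinuousOn u (Icc 0 d)) (hu0 : ∀ t ∈ Icc 0 d, 0 ≤ u t)
    (hle : ∀ t ∈ Icc 0 d, u t ≤ ∫ s in 0..t, K s * u s) : EqOn u 0 (Icc 0 d) := by
  rcases lt_or_ge d 0 with hd | hd
  · simp [Icc_eq_empty_of_lt hd]
  set V : ℝ → ℝ := fun t => ∫ s in 0..t, K s * u s
  have hKu : ∀ p ∈ Icc 0 d, ∀ q ∈ Icc 0 d, IntervalIntegrable (fun s => K s * u s) volume p q :=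
    fun p hp q hq => hK.intervalIntegrable_mul_continuousOn hu hp hq
  have hV_mono : ∀ p q, 0 ≤ p → p ≤ q → q ∈ Icc 0 d → V p ≤ V q := fun p q hp hpq hq =>
    integral_mono_interval le_rfl hp hpq
      (ae_restrict_of_forall_mem measurableSet_Ioc fun s hs =>
        mul_nonneg (hK0 s) (hu0 s ⟨hs.1.le, hs.2.trans hq.2⟩))
      (hKu 0 ⟨le_rfl, hd⟩ q hq)
  -- `u ≤ V` and `V` is nondecreasing, so `V t ≤ (∫ x..t, K) * V t` past a zero `x` of `V`
  have hV_step : ∀ x ∈ Icc 0 d, ∀ t ∈ Icc 0 d, x ≤ t → ∫ s in x..t, K s ≤ 1 / 2 → V x = 0 →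
      V t = 0 := fun x hx t ht hxt hK_half hVx => by
    have hVt0 : 0 ≤ V t := by simpa [V] using hV_mono 0 t le_rfl ht.1 ht
    have : V t ≤ 1 / 2 * V t :=
      calc V t = V x + ∫ s in x..t, K s * u s :=
            (integral_add_adjacent_intervals (hKu 0 ⟨le_rfl, hd⟩ x hx) (hKu x hx t ht)).symm
        _ ≤ ∫ s in x..t, K s * V t := by
          rw [hVx, zero_add]
          exact integral_mono_on hxt (hKu x hx t ht) ((hK.intervalIntegrable x t).mul_const _)
            fun s hs => mul_le_mul_of_nonneg_left ((hle s ⟨hx.1.trans hs.1, hs.2.trans ht.2⟩).trans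
              (hV_mono s t (hx.1.trans hs.1) hs.2 ht)) (hK0 s)
        _ = (∫ s in x..t, K s) * V t := integral_mul_const _ _
        _ ≤ 1 / 2 * V t := mul_le_mul_of_nonneg_right hK_half hVt0
    linarith
  have hV_zero : Icc 0 d ⊆ {t | V t = 0} := by
    have hclosed : IsClosed ({t | V t = 0} ∩ Icc 0 d) := by
      rw [inter_comm]
      exact (hK.continuousOn_primitive_mul hd hu).preimage_isClosed_of_isClosed isClosed_Icc
        isClosed_singleton
    refine hclosed.Icc_subset_of_forall_mem_nhdsWithin (by simp [V]) fun x ⟨hVx, hx⟩ => ?_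
    obtain ⟨δ, hδ, hKδ⟩ := hK.exists_integral_le x one_half_pos
    refine Filter.mem_of_superset (Ioo_mem_nhdsGT (lt_min (lt_add_of_pos_right x hδ) hx.2))
      fun t ht => hV_step x ⟨hx.1, hx.2.le⟩ t
        ⟨hx.1.trans ht.1.le, ht.2.le.trans (min_le_right _ _)⟩ ht.1.le ?_ hVx
    refine hKδ x (Metric.mem_ball_self hδ) t ?_
    rw [Metric.mem_ball, Real.dist_eq, abs_lt]
    constructor <;> linarith [ht.1, ht.2.trans_le (min_le_left _ _)]
  exact fun t ht => le_antisymm ((hle t ht).trans_eq (hV_zero ht)) (hu0 t ht)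

theorem exists_nonneg_forall_Ioc_neg {a b : ℝ} (hab : a ≤ b) (hg : ContinuousOn g (Icc a b))
    (ha : 0 ≤ g a) : ∃ c ∈ Icc a b, 0 ≤ g c ∧ ∀ s ∈ Ioc c b, g s < 0 := by
  set S := Icc a b ∩ g ⁻¹' Ici 0
  have hS : IsClosed S := hg.preimage_isClosed_of_isClosed isClosed_Icc isClosed_Ici
  have hSne : S.Nonempty := ⟨a, ⟨le_rfl, hab⟩, ha⟩
  have hSbdd : BddAbove S := ⟨b, fun s hs => hs.1.2⟩
  obtain ⟨hc, hgc⟩ := hS.csSup_mem hSne hSbdd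
  refine ⟨sSup S, hc, hgc, fun s hs => ?_⟩
  by_contra! hgs
  exact hs.1.not_ge (le_csSup hSbdd ⟨⟨hc.1.trans hs.1.le, hs.2⟩, hgs⟩)

theorem nonneg_of_eq_add_integral (hK : LocallyIntegrable K) (hK0 : ∀ s, 0 ≤ K s) {d : ℝ}
    (hg : ContinuousOn g (Icc 0 d)) (hg0 : 0 ≤ g 0)
    (hG : ∀ t ∈ Icc 0 d, IntervalIntegrable G volume 0 t)
    (hgG : ∀ t ∈ Icc 0 d, g t = g 0 + ∫ s in 0..t, G s)
    (hGK : ∀ s ∈ Icc 0 d, g s ≤ 0 → K s * g s ≤ G s) : ∀ t ∈ Icc 0 d, 0 ≤ g t := by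
  set u : ℝ → ℝ := fun t => max (-g t) 0
  have hu : ContinuousOn u (Icc 0 d) := hg.neg.sup continuousOn_const
  have hKu0 : ∀ s, 0 ≤ K s * u s := fun s => mul_nonneg (hK0 s) (le_max_right _ _)
  suffices EqOn u 0 (Icc 0 d) from fun t ht => by
    simpa [u] using this ht
  refine eqOn_zero_of_le_integral_mul hK hK0 hu (fun _ _ => le_max_right _ _) fun t ht => ?_
  rcases le_or_gt 0 (g t) with hgt | hgt
  · simpa [u, hgt] using integral_nonneg ht.1 fun s _ => hKu0 s
  -- on `(c, t]`, after the last time `c` at which `g ≥ 0`, we have `u = -g` and `-G ≤ K u`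
  obtain ⟨c, hc, hgc, hneg⟩ := exists_nonneg_forall_Ioc_neg ht.1
    (hg.mono (Icc_subset_Icc_right ht.2)) hg0
  have hcd : c ∈ Icc 0 d := ⟨hc.1, hc.2.trans ht.2⟩
  have hGct : IntervalIntegrable G volume c t := (hG c hcd).symm.trans (hG t ht)
  calc u t = -g t := max_eq_left (by linarith)
    _ ≤ g c - g t := by linarith
    _ = ∫ s in c..t, -G s := by
      rw [intervalIntegral.integral_neg, ← integral_interval_sub_left (hG t ht) (hG c hcd),
        hgG t ht, hgG c hcd]
      ring
    _ ≤ ∫ s in c..t, K s * u s := by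
      refine integral_mono_on_of_le_Ioo hc.2 hGct.neg
        (hK.intervalIntegrable_mul_continuousOn hu hcd ht) fun s hs => ?_
      have hgs := hneg s ⟨hs.1, hs.2.le⟩
      have := hGK s ⟨hc.1.trans hs.1.le, hs.2.le.trans ht.2⟩ hgs.le
      simp only [u, max_eq_left (neg_nonneg.mpr hgs.le)]
      linarith
    _ ≤ ∫ s in 0..t, K s * u s :=
      integral_mono_interval hc.1 hc.2 le_rfl (ae_of_all _ fun s => hKu0 s)
        (hK.intervalIntegrable_mul_continuousOn hu ⟨le_rfl, ht.1.trans ht.2⟩ ht)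

theorem le_of_eq_add_integral {d : ℝ} {g₁ g₂ G₁ G₂ : ℝ → ℝ}
    (hg₁ : ContinuousOn g₁ (Icc 0 d)) (hg₂ : ContinuousOn g₂ (Icc 0 d)) (h0 : g₁ 0 ≤ g₂ 0)
    (hG₁ : ∀ t ∈ Icc 0 d, IntervalIntegrable G₁ volume 0 t)
    (hG₂ : ∀ t ∈ Icc 0 d, IntervalIntegrable G₂ volume 0 t)
    (hg₁G : ∀ t ∈ Icc 0 d, g₁ t = g₁ 0 + ∫ s in 0..t, G₁ s)
    (hg₂G : ∀ t ∈ Icc 0 d, g₂ t = g₂ 0 + ∫ s in 0..t, G₂ s)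
    (hG : ∀ s ∈ Icc 0 d, g₂ s ≤ g₁ s → G₁ s ≤ G₂ s) : ∀ t ∈ Icc 0 d, g₁ t ≤ g₂ t := by
  have := nonneg_of_eq_add_integral (K := 0) (g := g₂ - g₁) (G := G₂ - G₁) locallyIntegrable_zero
    (fun _ => le_rfl) (hg₂.sub hg₁) (sub_nonneg.mpr h0) (fun t ht => (hG₂ t ht).sub (hG₁ t ht))
    (fun t ht => by
      simp only [Pi.sub_apply]
      rw [integral_sub (hG₂ t ht) (hG₁ t ht), hg₁G t ht, hg₂G t ht]
      ring)
    fun s hs hgs => by simpa using hG s hs (by simpa using hgs)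
  exact fun t ht => sub_nonneg.mp (this t ht)

structure IsCaratheodoryLipschitz (F : ℝ → ℝ → ℝ) (K : ℝ → ℝ) : Prop where
  intervalIntegrable_comp :
    ∀ g : ℝ → ℝ, Continuous g → ∀ a b, IntervalIntegrable (fun s => F s (g s)) volume a b
  abs_sub_le : ∀ s x y, |F s x - F s y| ≤ K s * |x - y|
  locallyIntegrable : LocallyIntegrable K
  nonneg : ∀ s, 0 ≤ K s

namespace IsCaratheodoryLipschitz

variable {F : ℝ → ℝ → ℝ}

theorem exists_eq_add_integral_of_integral_le_half (hF : IsCaratheodoryLipschitz F K)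
    {a b : ℝ} (hab : a ≤ b) (hKab : ∫ s in a..b, K s ≤ 1 / 2) (x₀ : ℝ) :
    ∃ g : ℝ → ℝ, Continuous g ∧ ∀ t ∈ Icc a b, g t = x₀ + ∫ s in a..t, F s (g s) := by
  let ext : C(Icc a b, ℝ) → ℝ → ℝ := fun y s => y (projIcc a b hab s)
  have hext : ∀ y, Continuous (ext y) := fun y => y.continuous.comp continuous_projIcc
  let Φ : C(Icc a b, ℝ) → C(Icc a b, ℝ) := fun y =>
    ⟨fun t => x₀ + ∫ s in a..t, F s (ext y s), continuous_const.add
      ((continuous_primitive (hF.intervalIntegrable_comp _ (hext y)) a).comp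
        continuous_subtype_val)⟩
  have hΦ : ContractingWith 2⁻¹ Φ := by
    refine ⟨by norm_num, LipschitzWith.of_dist_le_mul fun y₁ y₂ => ?_⟩
    rw [NNReal.coe_inv, NNReal.coe_ofNat, ContinuousMap.dist_le (by positivity)]
    rintro ⟨t, ht⟩
    have hi₁ := hF.intervalIntegrable_comp _ (hext y₁) a t
    have hi₂ := hF.intervalIntegrable_comp _ (hext y₂) a t
    calc dist (Φ y₁ ⟨t, ht⟩) (Φ y₂ ⟨t, ht⟩)
        = |∫ s in a..t, (F s (ext y₁ s) - F s (ext y₂ s))| := by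
          simp only [Φ, ContinuousMap.coe_mk, Real.dist_eq, integral_sub hi₁ hi₂]
          ring_nf
      _ ≤ ∫ s in a..t, |F s (ext y₁ s) - F s (ext y₂ s)| := abs_integral_le_integral_abs ht.1
      _ ≤ ∫ s in a..t, K s * dist y₁ y₂ := by
          refine integral_mono_on ht.1 (hi₁.sub hi₂).abs
            ((hF.locallyIntegrable.intervalIntegrable a t).mul_const _)
            fun s _ => (hF.abs_sub_le s _ _).trans (mul_le_mul_of_nonneg_left ?_ (hF.nonneg s))
          simpa [Real.dist_eq] using
            ContinuousMap.dist_apply_le_dist (f := y₁) (g := y₂) (projIcc a b hab s)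
      _ = (∫ s in a..t, K s) * dist y₁ y₂ := integral_mul_const _ _
      _ ≤ 2⁻¹ * dist y₁ y₂ := by
          refine mul_le_mul_of_nonneg_right ?_ dist_nonneg
          have := integral_mono_interval le_rfl ht.1 ht.2 (ae_of_all _ hF.nonneg)
            (hF.locallyIntegrable.intervalIntegrable a b)
          linarith
  refine ⟨ext (hΦ.fixedPoint Φ), hext _, fun t ht => ?_⟩
  have hfix := congr($(hΦ.fixedPoint_isFixedPt) ⟨t, ht⟩)
  simpa [ext, Φ, projIcc_of_mem hab ht] using hfix.symm

theorem exists_extend_eq_add_integral (hF : IsCaratheodoryLipschitz F K) {a b x₀ : ℝ}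
    (ha : 0 ≤ a) (hab : a ≤ b) (hKab : ∫ s in a..b, K s ≤ 1 / 2) (hg : Continuous g)
    (hgF : ∀ t ∈ Icc 0 a, g t = x₀ + ∫ s in 0..t, F s (g s)) :
    ∃ g' : ℝ → ℝ, Continuous g' ∧ ∀ t ∈ Icc 0 b, g' t = x₀ + ∫ s in 0..t, F s (g' s) := by
  obtain ⟨g₂, hg₂, hg₂F⟩ := hF.exists_eq_add_integral_of_integral_le_half hab hKab (g a)
  have hg₂a : g₂ a = g a := by simpa using hg₂F a (left_mem_Icc.2 hab)
  set g' : ℝ → ℝ := fun t => if t ≤ a then g t else g₂ t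
  have hg' : Continuous g' :=
    hg.if_le hg₂ continuous_id continuous_const fun x hx => by simp only [hx, hg₂a]
  have hg'₁ : ∀ s ≤ a, g' s = g s := fun s hs => if_pos hs
  have hg'₂ : ∀ s, a ≤ s → g' s = g₂ s := fun s hs => by
    rcases hs.eq_or_lt with rfl | hs
    · simp [g', hg₂a]
    · simp [g', not_le.2 hs]
  have hint₁ : ∀ t ∈ Icc 0 a, ∫ s in 0..t, F s (g' s) = ∫ s in 0..t, F s (g s) :=
    fun t ht => integral_congr fun s hs => by
      rw [uIcc_of_le ht.1] at hs
      simp only [hg'₁ s (hs.2.trans ht.2)]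
  refine ⟨g', hg', fun t ht => ?_⟩
  rcases le_total t a with hta | hat
  · rw [hg'₁ t hta, hint₁ t ⟨ht.1, hta⟩]
    exact hgF t ⟨ht.1, hta⟩
  have hint₂ : ∫ s in a..t, F s (g₂ s) = ∫ s in a..t, F s (g' s) :=
    integral_congr fun s hs => by
      rw [uIcc_of_le hat] at hs
      simp only [hg'₂ s hs.1]
  rw [hg'₂ t hat, hg₂F t ⟨hat, ht.2⟩, hgF a ⟨ha, le_rfl⟩, ← hint₁ a ⟨ha, le_rfl⟩, hint₂,
    add_assoc, integral_add_adjacent_intervals (hF.intervalIntegrable_comp g' hg' 0 a)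
      (hF.intervalIntegrable_comp g' hg' a t)]

theorem exists_eq_add_integral_Icc (hF : IsCaratheodoryLipschitz F K) (x₀ T : ℝ) :
    ∃ g : ℝ → ℝ, Continuous g ∧ ∀ t ∈ Icc 0 T, g t = x₀ + ∫ s in 0..t, F s (g s) := by
  rcases lt_or_ge T 0 with hT | hT
  · exact ⟨0, continuous_const, by simp [Icc_eq_empty_of_lt hT]⟩
  set A := {τ ∈ Icc 0 T | ∃ g : ℝ → ℝ, Continuous g ∧
    ∀ t ∈ Icc 0 τ, g t = x₀ + ∫ s in 0..t, F s (g s)}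
  have h0A : 0 ∈ A :=
    ⟨⟨le_rfl, hT⟩, fun _ => x₀, continuous_const, fun t ht => by simp [le_antisymm ht.2 ht.1]⟩
  have hA : BddAbove A := ⟨T, fun _ h => h.1.2⟩
  set τ := sSup A
  -- a solution up to some `a > τ - δ` extends past `τ` unless `T` is reached
  obtain ⟨δ, hδ, hKδ⟩ := hF.locallyIntegrable.exists_integral_le τ one_half_pos
  obtain ⟨a, haA, hτa⟩ := exists_lt_of_lt_csSup ⟨0, h0A⟩ (sub_lt_self τ hδ)
  have haτ : a ≤ τ := le_csSup hA haA
  obtain ⟨⟨ha0, haT⟩, g, hg, hgF⟩ := haA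
  set b := min (τ + δ / 2) T
  have hab : a ≤ b := le_min (by linarith) haT
  have hball : ∀ x, τ - δ < x → x ≤ τ + δ / 2 → x ∈ Metric.ball τ δ := fun x h₁ h₂ => by
    rw [Metric.mem_ball, Real.dist_eq, abs_lt]
    constructor <;> linarith
  obtain ⟨g', hg', hg'F⟩ := hF.exists_extend_eq_add_integral ha0 hab
    (hKδ a (hball a hτa (by linarith)) b (hball b (hτa.trans_le hab) (min_le_left _ _))) hg hgF
  have hbτ : b ≤ τ := le_csSup hA ⟨⟨ha0.trans hab, min_le_right _ _⟩, g', hg', hg'F⟩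
  have hbT : b = T := (min_choice _ _).resolve_left fun h => by linarith
  exact ⟨g', hg', hbT ▸ hg'F⟩

theorem eqOn_of_eq_add_integral (hF : IsCaratheodoryLipschitz F K) {x₀ T : ℝ}
    {g₁ g₂ : ℝ → ℝ} (hg₁ : Continuous g₁) (hg₂ : Continuous g₂)
    (hg₁F : ∀ t ∈ Icc 0 T, g₁ t = x₀ + ∫ s in 0..t, F s (g₁ s))
    (hg₂F : ∀ t ∈ Icc 0 T, g₂ t = x₀ + ∫ s in 0..t, F s (g₂ s)) : EqOn g₁ g₂ (Icc 0 T) := by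
  have hu : Continuous fun t => |g₁ t - g₂ t| := (hg₁.sub hg₂).abs
  have := eqOn_zero_of_le_integral_mul (d := T) hF.locallyIntegrable hF.nonneg hu.continuousOn
    (fun _ _ => abs_nonneg _) fun t ht => ?_
  · exact fun t ht => sub_eq_zero.mp (abs_eq_zero.mp (this ht))
  have hi₁ := hF.intervalIntegrable_comp g₁ hg₁ 0 t
  have hi₂ := hF.intervalIntegrable_comp g₂ hg₂ 0 t
  calc |g₁ t - g₂ t| = |∫ s in 0..t, (F s (g₁ s) - F s (g₂ s))| := by
        rw [integral_sub hi₁ hi₂, hg₁F t ht, hg₂F t ht, add_sub_add_left_eq_sub]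
    _ ≤ ∫ s in 0..t, |F s (g₁ s) - F s (g₂ s)| := abs_integral_le_integral_abs ht.1
    _ ≤ ∫ s in 0..t, K s * |g₁ s - g₂ s| :=
        integral_mono_on ht.1 (hi₁.sub hi₂).abs
          (hF.locallyIntegrable.intervalIntegrable_mul_continuousOn hu.continuousOn
            ⟨le_rfl, ht.1.trans ht.2⟩ ht)
          fun s _ => hF.abs_sub_le s _ _

theorem exists_eq_add_integral_Ici (hF : IsCaratheodoryLipschitz F K) (x₀ : ℝ) :
    ∃ g : ℝ → ℝ, ContinuousOn g (Ici 0) ∧ ∀ t ∈ Ici (0 : ℝ),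
      IntervalIntegrable (fun s => F s (g s)) volume 0 t ∧
      g t = x₀ + ∫ s in 0..t, F s (g s) := by
  choose sol hsol hsolF using hF.exists_eq_add_integral_Icc x₀
  have hagree : ∀ T, ∀ t ∈ Icc 0 T, sol t t = sol T t := fun T t ht =>
    hF.eqOn_of_eq_add_integral (hsol t) (hsol T) (hsolF t)
      (fun s hs => hsolF T s ⟨hs.1, hs.2.trans ht.2⟩) ⟨ht.1, le_rfl⟩
  refine ⟨fun t => sol t t, fun t ht => ?_, fun t ht => ⟨?_, ?_⟩⟩
  · have hcont : ContinuousOn (fun t => sol t t) (Icc 0 (t + 1)) :=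
      (hsol (t + 1)).continuousOn.congr fun s hs => hagree (t + 1) s hs
    refine (hcont t ⟨ht, by linarith⟩).mono_of_mem_nhdsWithin ?_
    rw [← Ici_inter_Iic]
    exact inter_mem_nhdsWithin _ (Iic_mem_nhds (by linarith))
  · refine (hF.intervalIntegrable_comp _ (hsol t) 0 t).congr fun s hs => ?_
    rw [uIoc_of_le ht] at hs
    simp only [hagree t s ⟨hs.1.le, hs.2⟩]
  · show sol t t = x₀ + ∫ s in 0..t, F s (sol s s)
    rw [hsolF t t ⟨ht, le_rfl⟩]
    congr 1
    refine integral_congr fun s hs => ?_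
    rw [uIcc_of_le ht] at hs
    simp only [hagree t s hs]

end IsCaratheodoryLipschitz

-- `riccati σ₁ σ₂ lam` is the paper's `f` (with `σ̄₁ = 1 / σ₁`) and `riccatiEquilibrium` its `γ∞⁰`,
-- the nonnegative zero of `f(·, 0)`.
noncomputable def riccati (σ₁ σ₂ lam γ h : ℝ) : ℝ :=
  -(1 / σ₁ ^ 2 + h) * γ ^ 2 - 2 * lam * γ + σ₂ ^ 2

noncomputable def riccatiEquilibrium (σ₁ σ₂ lam : ℝ) : ℝ :=
  -lam * σ₁ ^ 2 + √(lam ^ 2 * σ₁ ^ 4 + σ₁ ^ 2 * σ₂ ^ 2)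

section Riccati

variable {σ₁ σ₂ lam γ₀ : ℝ}

theorem riccatiEquilibrium_nonneg : 0 ≤ riccatiEquilibrium σ₁ σ₂ lam := by
  have : lam * σ₁ ^ 2 ≤ √(lam ^ 2 * σ₁ ^ 4 + σ₁ ^ 2 * σ₂ ^ 2) :=
    (le_abs_self _).trans (Real.abs_le_sqrt (by nlinarith [sq_nonneg (σ₁ * σ₂)]))
  unfold riccatiEquilibrium
  linarith

theorem riccati_riccatiEquilibrium (hσ₁ : σ₁ ≠ 0) :
    riccati σ₁ σ₂ lam (riccatiEquilibrium σ₁ σ₂ lam) 0 = 0 := by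
  have hr := Real.sq_sqrt (show 0 ≤ lam ^ 2 * σ₁ ^ 4 + σ₁ ^ 2 * σ₂ ^ 2 by positivity)
  unfold riccati riccatiEquilibrium
  generalize √(lam ^ 2 * σ₁ ^ 4 + σ₁ ^ 2 * σ₂ ^ 2) = r at hr ⊢
  field_simp
  linear_combination -hr

theorem riccati_nonpos (hσ₁ : σ₁ ≠ 0) (hlam : 0 ≤ lam) {γ h : ℝ} (hh : 0 ≤ h)
    (hγ : riccatiEquilibrium σ₁ σ₂ lam ≤ γ) : riccati σ₁ σ₂ lam γ h ≤ 0 := by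
  have heq := riccati_riccatiEquilibrium (σ₂ := σ₂) (lam := lam) hσ₁
  have hγinf := riccatiEquilibrium_nonneg (σ₁ := σ₁) (σ₂ := σ₂) (lam := lam)
  have ha : 0 ≤ 1 / σ₁ ^ 2 := by positivity
  unfold riccati at heq ⊢
  nlinarith [mul_nonneg (sub_nonneg.mpr hγ) (add_nonneg (mul_nonneg ha (by linarith :
    0 ≤ γ + riccatiEquilibrium σ₁ σ₂ lam)) (mul_nonneg zero_le_two hlam)),
    mul_nonneg hh (sq_nonneg γ)]

theorem riccati_le_riccati_zero (hlam : 0 ≤ lam) {x y h : ℝ} (hh : 0 ≤ h) (hy : 0 ≤ y)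
    (hyx : y ≤ x) : riccati σ₁ σ₂ lam x h ≤ riccati σ₁ σ₂ lam y 0 := by
  have ha : 0 ≤ 1 / σ₁ ^ 2 := by positivity
  unfold riccati
  nlinarith [mul_nonneg ha (mul_nonneg (sub_nonneg.mpr hyx) (by linarith : 0 ≤ x + y)),
    mul_nonneg hh (sq_nonneg x), mul_nonneg hlam (sub_nonneg.mpr hyx)]

theorem abs_riccati_sub_le (hlam : 0 ≤ lam) {M x y h : ℝ} (hh : 0 ≤ h) (hx : x ∈ Icc 0 M)
    (hy : y ∈ Icc 0 M) :
    |riccati σ₁ σ₂ lam x h - riccati σ₁ σ₂ lam y h| ≤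
      (2 * M * (1 / σ₁ ^ 2 + h) + 2 * lam) * |x - y| := by
  have ha : 0 ≤ 1 / σ₁ ^ 2 + h := by positivity
  have hxy : riccati σ₁ σ₂ lam x h - riccati σ₁ σ₂ lam y h =
      -((1 / σ₁ ^ 2 + h) * (x + y) + 2 * lam) * (x - y) := by
    unfold riccati
    ring
  rw [hxy, abs_mul, abs_neg, abs_of_nonneg (by nlinarith [hx.1, hy.1])]
  refine mul_le_mul_of_nonneg_right ?_ (abs_nonneg _)
  nlinarith [hx.2, hy.2]

theorem mul_le_riccati (hlam : 0 ≤ lam) {B γ h : ℝ} (hh : 0 ≤ h) (hγ : γ ≤ 0) (hB : -γ ≤ B) :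
    B * (1 / σ₁ ^ 2 + h) * γ ≤ riccati σ₁ σ₂ lam γ h := by
  have ha : 0 ≤ 1 / σ₁ ^ 2 + h := by positivity
  unfold riccati
  nlinarith [mul_nonneg ha (mul_nonneg (neg_nonneg.mpr hγ) (by linarith : 0 ≤ γ + B)),
    mul_nonneg hlam (neg_nonneg.mpr hγ), sq_nonneg σ₂]

theorem riccati_solution_nonneg (hlam : 0 ≤ lam) {h g : ℝ → ℝ} (h_nonneg : ∀ t, 0 ≤ h t)
    (h_locint : LocallyIntegrable h) {d : ℝ} (hg : ContinuousOn g (Icc 0 d)) (hg0 : 0 ≤ g 0)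
    (hgint : ∀ t ∈ Icc 0 d,
      IntervalIntegrable (fun s => riccati σ₁ σ₂ lam (g s) (h s)) volume 0 t)
    (hgF : ∀ t ∈ Icc 0 d, g t = g 0 + ∫ s in 0..t, riccati σ₁ σ₂ lam (g s) (h s)) :
    ∀ t ∈ Icc 0 d, 0 ≤ g t := by
  obtain ⟨B, hB⟩ := isCompact_Icc.exists_bound_of_continuousOn hg
  refine nonneg_of_eq_add_integral (K := fun s => max B 0 * (1 / σ₁ ^ 2 + h s))
    (((locallyIntegrable_const _).add h_locint).smul (max B 0))
    (fun s => mul_nonneg (le_max_right _ _) (add_nonneg (by positivity) (h_nonneg s)))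
    hg hg0 hgint hgF
    fun s hs hgs => mul_le_riccati hlam (h_nonneg s) hgs
      ((neg_le_abs _).trans ((hB s hs).trans (le_max_left _ _)))

theorem isCaratheodoryLipschitz_riccati_projIcc (hlam : 0 ≤ lam) {h : ℝ → ℝ}
    (h_nonneg : ∀ t, 0 ≤ h t) (h_locint : LocallyIntegrable h) {M : ℝ} (hM : 0 ≤ M) :
    IsCaratheodoryLipschitz (fun s x => riccati σ₁ σ₂ lam (projIcc 0 M hM x) (h s))
      (fun s => 2 * M * (1 / σ₁ ^ 2 + h s) + 2 * lam) where
  intervalIntegrable_comp g hg a b := by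
    have hcg : Continuous fun s => (projIcc 0 M hM (g s) : ℝ) :=
      continuous_subtype_val.comp (continuous_projIcc.comp hg)
    exact ((((locallyIntegrable_const _).add h_locint).intervalIntegrable a b).neg.mul_continuousOn
      (hcg.pow 2).continuousOn).sub ((hcg.const_mul _).intervalIntegrable a b) |>.add
      intervalIntegrable_const
  abs_sub_le s x y :=
    (abs_riccati_sub_le hlam (h_nonneg s) (projIcc 0 M hM x).2 (projIcc 0 M hM y).2).trans
      (mul_le_mul_of_nonneg_left (abs_projIcc_sub_projIcc hM) (by have := h_nonneg s; positivity))
  locallyIntegrable :=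
    (((locallyIntegrable_const _).add h_locint).smul (2 * M)).add (locallyIntegrable_const _)
  nonneg s := by have := h_nonneg s; positivity

theorem exists_riccati_solution_s2 (hσ₁ : σ₁ ≠ 0) (hlam : 0 ≤ lam) (hγ₀ : 0 ≤ γ₀) {h : ℝ → ℝ}
    (h_nonneg : ∀ t, 0 ≤ h t) (h_locint : LocallyIntegrable h) :
    ∃ g : ℝ → ℝ, g 0 = γ₀ ∧ ContinuousOn g (Ici 0) ∧ ∀ t ∈ Ici (0 : ℝ),
      IntervalIntegrable (fun s => riccati σ₁ σ₂ lam (g s) (h s)) volume 0 t ∧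
      g t = γ₀ + ∫ s in 0..t, riccati σ₁ σ₂ lam (g s) (h s) := by
  set M := max (riccatiEquilibrium σ₁ σ₂ lam) γ₀
  have hM : 0 ≤ M := hγ₀.trans (le_max_right _ _)
  set F : ℝ → ℝ → ℝ := fun s x => riccati σ₁ σ₂ lam (projIcc 0 M hM x) (h s)
  obtain ⟨g, hg, hgF⟩ := (isCaratheodoryLipschitz_riccati_projIcc hlam h_nonneg h_locint
    hM).exists_eq_add_integral_Ici γ₀
  have hg0 : g 0 = γ₀ := by simpa using (hgF 0 self_mem_Ici).2
  have hgF' : ∀ t ∈ Ici (0 : ℝ), g t = g 0 + ∫ s in 0..t, F s (g s) := fun t ht =>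
    hg0 ▸ (hgF t ht).2
  have hgM : ∀ t ∈ Ici (0 : ℝ), g t ∈ Icc 0 M := fun t ht => by
    have hgt : ContinuousOn g (Icc 0 t) := hg.mono Icc_subset_Ici_self
    have hconst : ∀ x : ℝ, ∀ u ∈ Icc 0 t, x = x + ∫ _ in (0 : ℝ)..u, (0 : ℝ) := by simp
    constructor
    · refine le_of_eq_add_integral continuousOn_const hgt (hg0 ▸ hγ₀)
        (fun _ _ => intervalIntegrable_const) (fun u hu => (hgF u hu.1).1) (hconst 0)
        (fun u hu => hgF' u hu.1) (fun s _ hs => ?_) t ⟨ht, le_rfl⟩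
      simpa [projIcc_of_le_left hM hs, riccati] using sq_nonneg σ₂
    · refine le_of_eq_add_integral hgt continuousOn_const (hg0 ▸ le_max_right _ _)
        (fun u hu => (hgF u hu.1).1) (fun _ _ => intervalIntegrable_const)
        (fun u hu => hgF' u hu.1) (hconst M) (fun s _ hs => ?_) t ⟨ht, le_rfl⟩
      simp only [projIcc_of_right_le hM hs]
      exact riccati_nonpos hσ₁ hlam (h_nonneg s) (le_max_left _ _)
  have hFg : ∀ s ∈ Ici (0 : ℝ), F s (g s) = riccati σ₁ σ₂ lam (g s) (h s) := fun s hs => by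
    simp only [F, projIcc_of_mem hM (hgM s hs)]
  refine ⟨g, hg0, hg, fun t ht => ⟨(hgF t ht).1.congr fun s hs => ?_, ?_⟩⟩
  · rw [uIoc_of_le ht] at hs
    exact hFg s hs.1.le
  · rw [(hgF t ht).2]
    refine congrArg _ (integral_congr fun s hs => ?_)
    rw [uIcc_of_le ht] at hs
    exact hFg s hs.1

theorem riccati_solution_bounds (hσ₁ : σ₁ ≠ 0) (hlam : 0 ≤ lam) (hγ₀ : 0 ≤ γ₀)
    {h g γ : ℝ → ℝ} (h_nonneg : ∀ t, 0 ≤ h t) (h_locint : LocallyIntegrable h)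
    (hg0 : g 0 = γ₀) (hg : ContinuousOn g (Ici 0))
    (hgF : ∀ t ∈ Ici (0 : ℝ),
      IntervalIntegrable (fun s => riccati σ₁ σ₂ lam (g s) (h s)) volume 0 t ∧
      g t = γ₀ + ∫ s in 0..t, riccati σ₁ σ₂ lam (g s) (h s))
    (hγ0 : γ 0 = γ₀) (hγ : ∀ t ∈ Ici (0 : ℝ),
      HasDerivWithinAt γ (riccati σ₁ σ₂ lam (γ t) 0) (Ici 0) t) {t : ℝ} (ht : 0 ≤ t) :
    0 ≤ g t ∧ g t ≤ γ t ∧ γ t ≤ max (riccatiEquilibrium σ₁ σ₂ lam) γ₀ := by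
  have hγc : ContinuousOn γ (Ici 0) := fun x hx => (hγ x hx).continuousWithinAt
  have hγ'c : ContinuousOn (fun s => riccati σ₁ σ₂ lam (γ s) 0) (Ici 0) := by
    unfold riccati
    fun_prop
  have hγint : ∀ u ∈ Icc 0 t,
      IntervalIntegrable (fun s => riccati σ₁ σ₂ lam (γ s) 0) volume 0 u := fun u hu =>
    (hγ'c.mono (by rw [uIcc_of_le hu.1]; exact Icc_subset_Ici_self)).intervalIntegrable
  have hγF : ∀ u ∈ Icc 0 t, γ u = γ 0 + ∫ s in 0..u, riccati σ₁ σ₂ lam (γ s) 0 := fun u hu => by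
    rw [integral_eq_sub_of_hasDeriv_right_of_le hu.1 (hγc.mono Icc_subset_Ici_self)
      (fun x hx => ((hγ x hx.1.le).hasDerivAt (Ici_mem_nhds hx.1)).hasDerivWithinAt)
      (hγint u hu)]
    ring
  have hgt : ContinuousOn g (Icc 0 t) := hg.mono Icc_subset_Ici_self
  have hγt : ContinuousOn γ (Icc 0 t) := hγc.mono Icc_subset_Ici_self
  have hgF' : ∀ u ∈ Icc 0 t, g u = g 0 + ∫ s in 0..u, riccati σ₁ σ₂ lam (g s) (h s) :=
    fun u hu => hg0 ▸ (hgF u hu.1).2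
  have hg_nonneg := riccati_solution_nonneg hlam h_nonneg h_locint hgt (hg0 ▸ hγ₀)
    (fun u hu => (hgF u hu.1).1) hgF'
  have hγ_nonneg := riccati_solution_nonneg hlam (fun _ => le_rfl) locallyIntegrable_zero hγt
    (hγ0 ▸ hγ₀) hγint hγF
  refine ⟨hg_nonneg t ⟨ht, le_rfl⟩, ?_, ?_⟩
  · exact le_of_eq_add_integral hgt hγt (hg0.trans hγ0.symm).le (fun u hu => (hgF u hu.1).1)
      hγint hgF' hγF (fun s hs hγg => riccati_le_riccati_zero hlam (h_nonneg s)
        (hγ_nonneg s hs) hγg) t ⟨ht, le_rfl⟩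
  · exact le_of_eq_add_integral hγt continuousOn_const (hγ0 ▸ le_max_right _ _) hγint
      (fun _ _ => intervalIntegrable_const) hγF (by simp)
      (fun s _ hγs => riccati_nonpos hσ₁ hlam le_rfl (le_max_left _ _ |>.trans hγs))
      t ⟨ht, le_rfl⟩

end Riccati

theorem stmt_2_general (σ₁ σ₂ lam : ℝ) (hσ₁ : 0 < σ₁) (hlam : 0 ≤ lam)
    (f : ℝ → ℝ → ℝ)
    (hf : ∀ γ h : ℝ, f γ h = -(1 / σ₁ ^ 2 + h) * γ ^ 2 - 2 * lam * γ + σ₂ ^ 2)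
    (γinf : ℝ)
    (hγinf : γinf = -lam * σ₁ ^ 2 + Real.sqrt (lam ^ 2 * σ₁ ^ 4 + σ₁ ^ 2 * σ₂ ^ 2))
    (γ₀ : ℝ) (hγ₀ : 0 ≤ γ₀)
    (h : ℝ → ℝ) (h_nonneg : ∀ t : ℝ, 0 ≤ h t)
    (h_locint : MeasureTheory.LocallyIntegrable h MeasureTheory.volume)
    (γzero : ℝ → ℝ) (hγzero0 : γzero 0 = γ₀)
    (hγzero : ∀ t ∈ Set.Ici (0 : ℝ),
      HasDerivWithinAt γzero (f (γzero t) 0) (Set.Ici 0) t) :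
    (∃ g : ℝ → ℝ, g 0 = γ₀ ∧ ContinuousOn g (Set.Ici 0) ∧
      ∀ t ∈ Set.Ici (0 : ℝ),
        IntervalIntegrable (fun s => f (g s) (h s)) MeasureTheory.volume 0 t ∧
        g t = γ₀ + ∫ s in (0 : ℝ)..t, f (g s) (h s)) ∧
    (∀ g : ℝ → ℝ,
      (g 0 = γ₀ ∧ ContinuousOn g (Set.Ici 0) ∧
        ∀ t ∈ Set.Ici (0 : ℝ),
          IntervalIntegrable (fun s => f (g s) (h s)) MeasureTheory.volume 0 t ∧
          g t = γ₀ + ∫ s in (0 : ℝ)..t, f (g s) (h s)) →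
      ∀ t ∈ Set.Ici (0 : ℝ), 0 ≤ g t ∧ g t ≤ γzero t ∧ γzero t ≤ max γinf γ₀) := by
  obtain rfl : f = riccati σ₁ σ₂ lam := funext₂ hf
  obtain rfl : γinf = riccatiEquilibrium σ₁ σ₂ lam := hγinf
  exact ⟨exists_riccati_solution_s2 hσ₁.ne' hlam hγ₀ h_nonneg h_locint,
    fun g ⟨hg0, hg, hgF⟩ t ht => riccati_solution_bounds hσ₁.ne' hlam hγ₀ h_nonneg
      h_locint hg0 hg hgF hγzero0 hγzero ht⟩

/-- For a Borel measurable, locally integrable, nonnegative information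
acquisition rate h and γ₀ ≥ 0, there exists an absolutely continuous solution of
γ' = f(γ(t), h(t)) (encoded in integral form), and every such solution satisfies
0 ≤ γ^h(t) ≤ γ⁰(t) ≤ max{γ∞⁰, γ₀}, where γ⁰ is the uncontrolled solution. -/
theorem stmt_2 (σ₁ σ₂ lam : ℝ) (hσ₁ : 0 < σ₁) (hσ₂ : 0 ≤ σ₂) (hlam : 0 ≤ lam)
    (f : ℝ → ℝ → ℝ)
    (hf : ∀ γ h : ℝ, f γ h = -(1 / σ₁ ^ 2 + h) * γ ^ 2 - 2 * lam * γ + σ₂ ^ 2)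
    (γinf : ℝ)
    (hγinf : γinf = -lam * σ₁ ^ 2 + Real.sqrt (lam ^ 2 * σ₁ ^ 4 + σ₁ ^ 2 * σ₂ ^ 2))
    (γ₀ : ℝ) (hγ₀ : 0 ≤ γ₀)
    (h : ℝ → ℝ) (h_meas : Measurable h) (h_nonneg : ∀ t : ℝ, 0 ≤ h t)
    (h_locint : MeasureTheory.LocallyIntegrable h MeasureTheory.volume)
    (γzero : ℝ → ℝ) (hγzero0 : γzero 0 = γ₀)
    (hγzero : ∀ t ∈ Set.Ici (0 : ℝ),
      HasDerivWithinAt γzero (f (γzero t) 0) (Set.Ici 0) t) :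
    (∃ g : ℝ → ℝ, g 0 = γ₀ ∧ ContinuousOn g (Set.Ici 0) ∧
      ∀ t ∈ Set.Ici (0 : ℝ),
        IntervalIntegrable (fun s => f (g s) (h s)) MeasureTheory.volume 0 t ∧
        g t = γ₀ + ∫ s in (0 : ℝ)..t, f (g s) (h s)) ∧
    (∀ g : ℝ → ℝ,
      (g 0 = γ₀ ∧ ContinuousOn g (Set.Ici 0) ∧
        ∀ t ∈ Set.Ici (0 : ℝ),
          IntervalIntegrable (fun s => f (g s) (h s)) MeasureTheory.volume 0 t ∧
          g t = γ₀ + ∫ s in (0 : ℝ)..t, f (g s) (h s)) →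
      ∀ t ∈ Set.Ici (0 : ℝ), 0 ≤ g t ∧ g t ≤ γzero t ∧ γzero t ≤ max γinf γ₀) :=
  stmt_2_general σ₁ σ₂ lam hσ₁ hlam f hf γinf hγinf γ₀ hγ₀ h h_nonneg h_locint γzero hγzero0 hγzero
end

section
/- Let κ, ρ, δ > 0 and λ ≥ 0, and define a₁ := −δρ/4 + √(δ²ρ² + 4κρ)/4, a₃ := 2a₁ρ/(δρ + λρ + 2a₁), a₂ := a₃(2ρ − a₃)/(2ρ(2λ + δ)). Then 4a₁a₂ − a₃² > 0; consequently, since a₁ > 0, the symmetric 2×2 matrix A with entries A₁₁ = 2a₁, A₁₂ = A₂₁ = a₃, A₂₂ = 2a₂ is positive definite. -/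
/-!
Since `√(δ²ρ² + 4κρ) > δρ`, the coefficient `a₁` is positive, and then so is `a₃`. Eliminating
`a₂` and then `a₁ρ` through the defining relation `a₃ (δρ + λρ + 2a₁) = 2a₁ρ` gives
`4a₁a₂ − a₃² = a₃² (δρ + 2a₁) / (ρ (2λ + δ)) > 0`. A symmetric `2 × 2` matrix with positive
leading entry and positive determinant is positive definite, by completing the square.
-/

open Matrix

theorem Matrix.posDef_fin_two_of_pos_of_det_pos {a b c : ℝ} (ha : 0 < a)
    (hdet : 0 < a * c - b ^ 2) : (!![a, b; b, c] : Matrix (Fin 2) (Fin 2) ℝ).PosDef := by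
  refine posDef_iff_dotProduct_mulVec.mpr ⟨?_, fun v hv ↦ ?_⟩
  · ext i j
    fin_cases i <;> fin_cases j <;> simp
  have hform : star v ⬝ᵥ (!![a, b; b, c] *ᵥ v) =
      a * v 0 ^ 2 + 2 * b * v 0 * v 1 + c * v 1 ^ 2 := by
    simp [dotProduct, mulVec, Fin.sum_univ_two]
    ring
  have hsquare : 0 < (a * v 0 + b * v 1) ^ 2 + (a * c - b ^ 2) * v 1 ^ 2 := by
    rcases eq_or_ne (v 1) 0 with h1 | h1
    · have h0 : v 0 ≠ 0 := fun h0 ↦ hv (by ext i; fin_cases i <;> simp [h0, h1])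
      rw [h1]
      linarith [sq_pos_of_ne_zero (mul_ne_zero ha.ne' h0)]
    · nlinarith [sq_nonneg (a * v 0 + b * v 1), mul_pos hdet (sq_pos_of_ne_zero h1)]
  rw [hform]
  refine pos_of_mul_pos_right (a := a) ?_ ha.le
  linarith

theorem Real.lt_sqrt_sq_add (x : ℝ) {y : ℝ} (hy : 0 < y) : x < √(x ^ 2 + y) :=
  calc x ≤ |x| := le_abs_self x
    _ = √(x ^ 2) := (Real.sqrt_sq_eq_abs x).symm
    _ < √(x ^ 2 + y) := Real.sqrt_lt_sqrt (sq_nonneg x) (by linarith)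

theorem four_mul_mul_sub_sq_eq {ρ δ lam a₁ a₂ a₃ : ℝ} (hρ : ρ ≠ 0) (hE : 2 * lam + δ ≠ 0)
    (hD : δ * ρ + lam * ρ + 2 * a₁ ≠ 0)
    (ha₃ : a₃ = 2 * a₁ * ρ / (δ * ρ + lam * ρ + 2 * a₁))
    (ha₂ : a₂ = a₃ * (2 * ρ - a₃) / (2 * ρ * (2 * lam + δ))) :
    4 * a₁ * a₂ - a₃ ^ 2 = a₃ ^ 2 * (δ * ρ + 2 * a₁) / (ρ * (2 * lam + δ)) := by
  have h : a₃ * (δ * ρ + lam * ρ + 2 * a₁) = 2 * a₁ * ρ := by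
    rw [ha₃, div_mul_cancel₀ _ hD]
  rw [ha₂]
  field_simp
  linear_combination (-4 * a₃) * h

/-- With the explicit coefficients a₁, a₂, a₃, one has 4a₁a₂ − a₃² > 0,
and hence (since a₁ > 0) the Hessian matrix A = [[2a₁, a₃], [a₃, 2a₂]] is
positive definite. -/
theorem stmt_4 (κ ρ δ lam : ℝ) (hκ : 0 < κ) (hρ : 0 < ρ) (hδ : 0 < δ) (hlam : 0 ≤ lam)
    (a₁ a₂ a₃ : ℝ)
    (ha₁ : a₁ = -(δ * ρ) / 4 + Real.sqrt (δ ^ 2 * ρ ^ 2 + 4 * κ * ρ) / 4)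
    (ha₃ : a₃ = 2 * a₁ * ρ / (δ * ρ + lam * ρ + 2 * a₁))
    (ha₂ : a₂ = a₃ * (2 * ρ - a₃) / (2 * ρ * (2 * lam + δ))) :
    0 < 4 * a₁ * a₂ - a₃ ^ 2 ∧
    (!![2 * a₁, a₃; a₃, 2 * a₂] : Matrix (Fin 2) (Fin 2) ℝ).PosDef := by
  have hsqrt : δ * ρ < √(δ ^ 2 * ρ ^ 2 + 4 * κ * ρ) := by
    simpa only [mul_pow] using Real.lt_sqrt_sq_add (δ * ρ) (by positivity : 0 < 4 * κ * ρ)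
  have ha₁_pos : 0 < a₁ := by rw [ha₁]; linarith
  have ha₃_pos : 0 < a₃ := by rw [ha₃]; positivity
  have hdet : 0 < 4 * a₁ * a₂ - a₃ ^ 2 := by
    rw [four_mul_mul_sub_sq_eq hρ.ne' (by positivity) (by positivity) ha₃ ha₂]
    positivity
  exact ⟨hdet, Matrix.posDef_fin_two_of_pos_of_det_pos (by positivity) (by linarith)⟩
end

section
/- There exists a unique γ_eq ∈ [0, γ∞⁰] such that f(γ_eq, H*(γ_eq)) = 0; moreover f(γ, H*(γ)) > 0 for all γ ∈ [0, γ_eq) and f(γ, H*(γ)) < 0 for all γ ∈ (γ_eq, γ_max]. -/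
/-!
The closed-loop drift `F γ = f(γ, H*(γ))` is strictly decreasing on `[0, γ_max]`: `γ ↦ f(γ, h)` is
strictly decreasing on `γ ≥ 0` for `h ≥ 0`, `f` is antitone in `h`, and `H*` is nondecreasing.
Since `c'` is strictly increasing and `c'(H*(γ)) = max(γ² v'(γ), c'(0))`, the feedback `H*`, and
hence `F`, is continuous on `(0, γ_max)`. As `F(0) = σ₂² ≥ 0` and `F(γ∞⁰) ≤ f(γ∞⁰, 0) = 0`, the
intermediate value theorem gives a zero, and strict monotonicity gives uniqueness and the signs.
Continuity is not available at `0`, so the IVT is applied on `[t, γ∞⁰]`, where `t` is a zero of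
`f(·, H*(γ∞⁰)) ≤ F` on `[0, γ∞⁰]`; if `t = 0` then `σ₂ = 0` and `0` itself is the zero of `F`.
-/

open Set Filter Topology

theorem StrictConvexOn.strictMonoOn_of_hasDerivWithinAt {S : Set ℝ} {f f' : ℝ → ℝ}
    (hf : StrictConvexOn ℝ S f) (hf' : ∀ x ∈ S, HasDerivWithinAt f (f' x) S x) :
    StrictMonoOn f' S := fun x hx y hy hxy =>
  (hf.lt_slope_of_hasDerivWithinAt hx hy hxy (hf' x hx)).trans
    (hf.slope_lt_of_hasDerivWithinAt hx hy hxy (hf' y hy))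

theorem ContinuousAt.of_strictMonoOn_comp {α β γ : Type*} [TopologicalSpace α] [LinearOrder β]
    [TopologicalSpace β] [OrderTopology β] [LinearOrder γ] [TopologicalSpace γ] [OrderTopology γ]
    {g : β → γ} {H : α → β} {s : Set β} {x : α} (hs : s.OrdConnected) (hg : StrictMonoOn g s)
    (hHs : ∀ᶠ y in 𝓝 x, H y ∈ s) (hgH : ContinuousAt (g ∘ H) x) : ContinuousAt H x := by
  have hx : H x ∈ s := hHs.self_of_nhds
  refine tendsto_order.2 ⟨fun a ha => ?_, fun b hb => ?_⟩
  · by_cases has : a ∈ s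
    · filter_upwards [hHs, (tendsto_order.1 hgH).1 _ (hg has hx ha)] with y hy hgy
      exact lt_of_not_ge fun hya => (hg.monotoneOn hy has hya).not_gt hgy
    · filter_upwards [hHs] with y hy
      exact lt_of_not_ge fun hya => has (hs.out hy hx ⟨hya, ha.le⟩)
  · by_cases hbs : b ∈ s
    · filter_upwards [hHs, (tendsto_order.1 hgH).2 _ (hg hx hbs hb)] with y hy hgy
      exact lt_of_not_ge fun hby => (hg.monotoneOn hbs hy hby).not_gt hgy
    · filter_upwards [hHs] with y hy
      exact lt_of_not_ge fun hby => hbs (hs.out hx hy ⟨hb.le, hby⟩)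

theorem continuousOn_of_strictMonoOn_comp_eq_max {c' w H : ℝ → ℝ} {s : Set ℝ} (hs : IsOpen s)
    (hc' : StrictMonoOn c' (Ici 0)) (hw : ContinuousOn w s) (hH : ∀ x ∈ s, 0 ≤ H x)
    (hcH : ∀ x ∈ s, c' (H x) = max (w x) (c' 0)) : ContinuousOn H s := by
  intro x hx
  have hxs : s ∈ 𝓝 x := hs.mem_nhds hx
  refine (ContinuousAt.of_strictMonoOn_comp ordConnected_Ici hc'
    (eventually_of_mem hxs hH) ?_).continuousWithinAt
  have hmax : ContinuousAt (fun y => max (w y) (c' 0)) x :=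
    (hw.continuousAt hxs).max continuousAt_const
  exact hmax.congr_of_eventuallyEq (eventually_of_mem hxs hcH)

noncomputable def drift (σ₁ σ₂ lam γ h : ℝ) : ℝ := -(1 / σ₁ ^ 2 + h) * γ ^ 2 - 2 * lam * γ + σ₂ ^ 2

section Drift

variable {σ₁ σ₂ lam : ℝ}

@[simp]
theorem drift_zero_left (h : ℝ) : drift σ₁ σ₂ lam 0 h = σ₂ ^ 2 := by
  simp [drift]

theorem continuous_drift_left (h : ℝ) : Continuous fun γ => drift σ₁ σ₂ lam γ h := by
  unfold drift; fun_prop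

theorem antitone_drift (γ : ℝ) : Antitone (drift σ₁ σ₂ lam γ) := fun h h' hh => by
  unfold drift; nlinarith [mul_le_mul_of_nonneg_right hh (sq_nonneg γ)]

theorem gammaInf_nonneg : 0 ≤ -lam * σ₁ ^ 2 + √(lam ^ 2 * σ₁ ^ 4 + σ₁ ^ 2 * σ₂ ^ 2) := by
  have : lam * σ₁ ^ 2 ≤ √(lam ^ 2 * σ₁ ^ 4 + σ₁ ^ 2 * σ₂ ^ 2) :=
    Real.le_sqrt_of_sq_le (by nlinarith [sq_nonneg (σ₁ * σ₂)])
  linarith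

theorem drift_gammaInf_eq_zero (hσ₁ : σ₁ ≠ 0) :
    drift σ₁ σ₂ lam (-lam * σ₁ ^ 2 + √(lam ^ 2 * σ₁ ^ 4 + σ₁ ^ 2 * σ₂ ^ 2)) 0 = 0 := by
  have hsq := Real.sq_sqrt (by positivity : 0 ≤ lam ^ 2 * σ₁ ^ 4 + σ₁ ^ 2 * σ₂ ^ 2)
  generalize √(lam ^ 2 * σ₁ ^ 4 + σ₁ ^ 2 * σ₂ ^ 2) = r at hsq ⊢
  unfold drift
  field_simp
  linear_combination -hsq

theorem strictAntiOn_drift_comp (hσ₁ : σ₁ ≠ 0) (hlam : 0 ≤ lam) {H : ℝ → ℝ} {s : Set ℝ}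
    (hs : s ⊆ Ici 0) (hH : MonotoneOn H s) (hH0 : ∀ x ∈ s, 0 ≤ H x) :
    StrictAntiOn (fun γ => drift σ₁ σ₂ lam γ (H γ)) s := by
  intro x hx y hy hxy
  have hx0 : 0 ≤ x := hs hx
  have ha : 0 < 1 / σ₁ ^ 2 + H x := by have := hH0 x hx; positivity
  have hsq : x ^ 2 < y ^ 2 := by nlinarith
  calc drift σ₁ σ₂ lam y (H y) ≤ drift σ₁ σ₂ lam y (H x) := antitone_drift y (hH hx hy hxy.le)
    _ < drift σ₁ σ₂ lam x (H x) := by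
      unfold drift; nlinarith [mul_lt_mul_of_pos_left hsq ha]

theorem exists_drift_comp_eq_zero {H : ℝ → ℝ} {γinf γmax : ℝ}
    (hγinf : 0 ≤ γinf) (hγmax : γinf < γmax) (hroot : drift σ₁ σ₂ lam γinf 0 = 0)
    (hH : MonotoneOn H (Icc 0 γmax)) (hH0 : ∀ x ∈ Icc 0 γmax, 0 ≤ H x)
    (hHc : ContinuousOn H (Ioo 0 γmax)) :
    ∃ γ ∈ Icc 0 γinf, drift σ₁ σ₂ lam γ (H γ) = 0 := by
  have hγinf_mem : γinf ∈ Icc 0 γmax := ⟨hγinf, hγmax.le⟩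
  have hFinf : drift σ₁ σ₂ lam γinf (H γinf) ≤ 0 :=
    hroot ▸ antitone_drift γinf (hH0 γinf hγinf_mem)
  obtain ⟨t, ⟨ht0, htinf⟩, hFt⟩ : ∃ t ∈ Icc 0 γinf, drift σ₁ σ₂ lam t (H γinf) = 0 :=
    intermediate_value_Icc' hγinf (continuous_drift_left _).continuousOn
      ⟨hFinf, by simpa using sq_nonneg σ₂⟩
  rcases ht0.eq_or_lt with rfl | ht0
  · exact ⟨0, ⟨le_rfl, hγinf⟩, by simpa using hFt⟩
  have hsub : Icc t γinf ⊆ Ioo 0 γmax := Icc_subset_Ioo ht0 hγmax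
  have hFt' : 0 ≤ drift σ₁ σ₂ lam t (H t) :=
    hFt ▸ antitone_drift t (hH ⟨ht0.le, htinf.trans hγmax.le⟩ hγinf_mem htinf)
  have hFc : ContinuousOn (fun γ => drift σ₁ σ₂ lam γ (H γ)) (Ioo 0 γmax) := by
    unfold drift; fun_prop
  obtain ⟨γ, hγ, hFγ⟩ := intermediate_value_Icc' htinf (hFc.mono hsub) ⟨hFinf, hFt'⟩
  exact ⟨γ, ⟨ht0.le.trans hγ.1, hγ.2⟩, hFγ⟩

end Drift

theorem stmt_16_general
    (σ₁ σ₂ lam γmax hmax : ℝ)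
    (hσ₁ : 0 < σ₁) (hlam : 0 ≤ lam)
    (f : ℝ → ℝ → ℝ)
    (hf : ∀ γ h : ℝ, f γ h = -(1 / σ₁ ^ 2 + h) * γ ^ 2 - 2 * lam * γ + σ₂ ^ 2)
    (γinf : ℝ)
    (hγinf : γinf = -lam * σ₁ ^ 2 + Real.sqrt (lam ^ 2 * σ₁ ^ 4 + σ₁ ^ 2 * σ₂ ^ 2))
    (hγmax : γinf < γmax)
    (c c' : ℝ → ℝ)
    (hc_conv : StrictConvexOn ℝ (Set.Ici 0) c)
    (hc_deriv : ∀ x ∈ Set.Ici (0 : ℝ), HasDerivWithinAt c (c' x) (Set.Ici 0) x)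
    (v' : ℝ → ℝ)
    (hv'_cont : ContinuousOn v' (Set.Ioo 0 γmax))
    (Hstar : ℝ → ℝ)
    (hHstar : ∀ γ ∈ Set.Icc (0 : ℝ) γmax,
      (γ ^ 2 * v' γ < c' 0 → Hstar γ = 0) ∧
      (c' 0 ≤ γ ^ 2 * v' γ →
        Hstar γ ∈ Set.Icc (0 : ℝ) hmax ∧ c' (Hstar γ) = γ ^ 2 * v' γ))
    (hHstar_nonneg : ∀ γ ∈ Set.Icc (0 : ℝ) γmax, 0 ≤ Hstar γ)
    (hHstar_mono : MonotoneOn Hstar (Set.Icc 0 γmax)) :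
    ∃ γeq ∈ Set.Icc (0 : ℝ) γinf,
      f γeq (Hstar γeq) = 0 ∧
      (∀ γ' ∈ Set.Icc (0 : ℝ) γinf, f γ' (Hstar γ') = 0 → γ' = γeq) ∧
      (∀ γ ∈ Set.Ico (0 : ℝ) γeq, 0 < f γ (Hstar γ)) ∧
      (∀ γ ∈ Set.Ioc γeq γmax, f γ (Hstar γ) < 0) := by
  obtain rfl : f = drift σ₁ σ₂ lam := funext₂ hf
  have hγinf0 : 0 ≤ γinf := hγinf ▸ gammaInf_nonneg
  have hroot : drift σ₁ σ₂ lam γinf 0 = 0 := hγinf ▸ drift_gammaInf_eq_zero hσ₁.ne'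
  have hc'mono : StrictMonoOn c' (Ici 0) := hc_conv.strictMonoOn_of_hasDerivWithinAt hc_deriv
  have hcH : ∀ γ ∈ Icc 0 γmax, c' (Hstar γ) = max (γ ^ 2 * v' γ) (c' 0) := by
    intro γ hγ
    rcases lt_or_ge (γ ^ 2 * v' γ) (c' 0) with h | h
    · rw [(hHstar γ hγ).1 h, max_eq_right h.le]
    · rw [((hHstar γ hγ).2 h).2, max_eq_left h]
  have hHc : ContinuousOn Hstar (Ioo 0 γmax) :=
    continuousOn_of_strictMonoOn_comp_eq_max isOpen_Ioo hc'mono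
      ((continuousOn_id.pow 2).mul hv'_cont) (fun γ hγ => hHstar_nonneg γ (Ioo_subset_Icc_self hγ))
      (fun γ hγ => hcH γ (Ioo_subset_Icc_self hγ))
  have hanti : StrictAntiOn (fun γ => drift σ₁ σ₂ lam γ (Hstar γ)) (Icc 0 γmax) :=
    strictAntiOn_drift_comp hσ₁.ne' hlam (fun _ hγ => hγ.1) hHstar_mono hHstar_nonneg
  obtain ⟨γeq, hγeq, hzero⟩ :=
    exists_drift_comp_eq_zero hγinf0 hγmax hroot hHstar_mono hHstar_nonneg hHc
  have hγeq_mem : γeq ∈ Icc 0 γmax := ⟨hγeq.1, hγeq.2.trans hγmax.le⟩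
  refine ⟨γeq, hγeq, hzero, fun γ hγ hγ0 => ?_, fun γ hγ => ?_, fun γ hγ => ?_⟩
  · exact hanti.injOn ⟨hγ.1, hγ.2.trans hγmax.le⟩ hγeq_mem (hγ0.trans hzero.symm)
  · exact hzero ▸ hanti ⟨hγ.1, hγ.2.le.trans hγeq_mem.2⟩ hγeq_mem hγ.2
  · exact hzero ▸ hanti hγeq_mem ⟨hγeq.1.trans hγ.1.le, hγ.2⟩ hγ.1

/-- There exists a unique γ_eq ∈ [0, γ∞⁰] with f(γ_eq, H*(γ_eq)) = 0;
moreover f(γ, H*(γ)) > 0 on [0, γ_eq) and f(γ, H*(γ)) < 0 on (γ_eq, γ_max]. -/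
theorem stmt_16
    (σ₁ σ₂ lam δ abar γmax hmax : ℝ)
    (hσ₁ : 0 < σ₁) (hσ₂ : 0 ≤ σ₂) (hlam : 0 ≤ lam) (hδ : 0 < δ) (habar : 0 < abar)
    (f : ℝ → ℝ → ℝ)
    (hf : ∀ γ h : ℝ, f γ h = -(1 / σ₁ ^ 2 + h) * γ ^ 2 - 2 * lam * γ + σ₂ ^ 2)
    (γinf : ℝ)
    (hγinf : γinf = -lam * σ₁ ^ 2 + Real.sqrt (lam ^ 2 * σ₁ ^ 4 + σ₁ ^ 2 * σ₂ ^ 2))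
    (hγmax : γinf < γmax)
    (c c' : ℝ → ℝ)
    (hc_nonneg : ∀ x : ℝ, 0 ≤ x → 0 ≤ c x)
    (hc_conv : StrictConvexOn ℝ (Set.Ici 0) c)
    (hc_mono : StrictMonoOn c (Set.Ici 0))
    (hc_smooth : ContDiffOn ℝ 2 c (Set.Ici 0))
    (hc_deriv : ∀ x ∈ Set.Ici (0 : ℝ), HasDerivWithinAt c (c' x) (Set.Ici 0) x)
    (hhmax : 0 < hmax) (hc_hmax : c' hmax = γmax ^ 2 * (abar / δ))
    (Adm : (ℝ → ℝ) → Prop)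
    (hAdm : ∀ h : ℝ → ℝ, Adm h ↔ Measurable h ∧ ∀ t : ℝ, h t ∈ Set.Icc 0 hmax)
    (sol : (ℝ → ℝ) → ℝ → ℝ → ℝ)
    (hsol : ∀ h : ℝ → ℝ, Adm h → ∀ γ₀ ∈ Set.Icc (0 : ℝ) γmax,
      sol h γ₀ 0 = γ₀ ∧
      ContinuousOn (sol h γ₀) (Set.Ici 0) ∧
      (∀ t ∈ Set.Ici (0 : ℝ), sol h γ₀ t ∈ Set.Icc 0 γmax) ∧
      (∀ t ∈ Set.Ici (0 : ℝ),
        sol h γ₀ t = γ₀ + ∫ s in (0 : ℝ)..t, f (sol h γ₀ s) (h s)))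
    (J : (ℝ → ℝ) → ℝ → ℝ)
    (hJ : ∀ (h : ℝ → ℝ) (γ₀ : ℝ), J h γ₀ =
      ∫ t in Set.Ioi (0 : ℝ), Real.exp (-δ * t) * (abar * sol h γ₀ t + c (h t)))
    (v : ℝ → ℝ)
    (hv : ∀ γ₀ ∈ Set.Icc (0 : ℝ) γmax,
      v γ₀ = sInf ((fun h => J h γ₀) '' {h : ℝ → ℝ | Adm h}))
    (v' : ℝ → ℝ)
    (hv_conc : ConcaveOn ℝ (Set.Icc 0 γmax) v)
    (hv'_deriv : ∀ x ∈ Set.Ioo (0 : ℝ) γmax, HasDerivAt v (v' x) x)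
    (hv'_cont : ContinuousOn v' (Set.Ioo 0 γmax))
    (hv'_zero : HasDerivWithinAt v (v' 0) (Set.Icc 0 γmax) 0)
    (hv'_gmax : HasDerivWithinAt v (v' γmax) (Set.Icc 0 γmax) γmax)
    (Hstar : ℝ → ℝ)
    (hHstar : ∀ γ ∈ Set.Icc (0 : ℝ) γmax,
      (γ ^ 2 * v' γ < c' 0 → Hstar γ = 0) ∧
      (c' 0 ≤ γ ^ 2 * v' γ →
        Hstar γ ∈ Set.Icc (0 : ℝ) hmax ∧ c' (Hstar γ) = γ ^ 2 * v' γ))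
    (hHstar_nonneg : ∀ γ ∈ Set.Icc (0 : ℝ) γmax, 0 ≤ Hstar γ)
    (hHstar_mono : MonotoneOn Hstar (Set.Icc 0 γmax)) :
    ∃ γeq ∈ Set.Icc (0 : ℝ) γinf,
      f γeq (Hstar γeq) = 0 ∧
      (∀ γ' ∈ Set.Icc (0 : ℝ) γinf, f γ' (Hstar γ') = 0 → γ' = γeq) ∧
      (∀ γ ∈ Set.Ico (0 : ℝ) γeq, 0 < f γ (Hstar γ)) ∧
      (∀ γ ∈ Set.Ioc γeq γmax, f γ (Hstar γ) < 0) :=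
  stmt_16_general σ₁ σ₂ lam γmax hmax hσ₁ hlam f hf γinf hγinf hγmax c c' hc_conv hc_deriv v'
    hv'_cont Hstar hHstar hHstar_nonneg hHstar_mono
end

section
/- Let ζ > 0, ā > 0, δ > 0, λ ≥ 0, σ₁ > 0, σ₂ ≥ 0 and σ̄₁ := 1/σ₁. Suppose v : (0,∞) → [0,∞) is differentiable with v'(γ) > 0 for all γ > 0 and satisfies, for all γ > 0, the equation 0 = −(1/(4ζ))·γ⁴·v'(γ)² + (−σ̄₁² − 2λ/γ + σ₂²/γ²)·γ²·v'(γ) + ā·γ − δ·v(γ). Then v is bounded on (0,∞), lim_{γ→∞} γ^{3/2}·v'(γ) = 2·√(ζ·ā), and with H*(γ) := γ²·v'(γ)/(2ζ) one has lim_{γ→∞} H*(γ)/γ^{1/2} = √(ā)/√(ζ). -/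
/-!
Write `q(γ) = γ^{3/2} v'(γ)` and `A(γ) = σ̄₁² + 2λ/γ - σ₂²/γ²`. Multiplying the HJB equation by
`4ζ/γ` gives `q² + 4ζ A(γ) γ^{-1/2} q = 4ζ (ā - δ v(γ)/γ)`. Since `A(γ) → σ̄₁² > 0`, for large `γ`
the middle term is nonnegative and so `q ≤ 2√(ζā)`; the resulting bound
`v' ≤ 2√(ζā) γ^{-3/2}` is integrable at infinity, so `v` is bounded. Then `v/γ → 0` and the
middle term tends to `0`, whence `q² → 4ζā`. The limit of `H*(γ)/γ^{1/2} = q(γ)/(2ζ)` follows.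
-/

open Filter Real Topology Set

lemma rpow_three_halves_eq_mul_sqrt {x : ℝ} (hx : 0 ≤ x) : x ^ ((3 : ℝ) / 2) = x * √x := by
  rw [Real.sqrt_eq_rpow, ← Real.rpow_one_add' hx (by norm_num)]
  norm_num

/-- On `[a, ∞)` the function `v + 2C x^{-1/2}` is antitone and bounds `v`. -/
lemma bddAbove_image_Ioi_of_rpow_mul_deriv_le {v v' : ℝ → ℝ} {a C : ℝ} (ha : 0 < a)
    (hv : ∀ x, 0 < x → HasDerivAt v (v' x) x) (hv'_nonneg : ∀ x, 0 < x → 0 ≤ v' x)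
    (hv'_le : ∀ x, a ≤ x → x ^ ((3 : ℝ) / 2) * v' x ≤ C) :
    BddAbove (v '' Ioi 0) := by
  have hC : 0 ≤ C := (mul_nonneg (by positivity) (hv'_nonneg a ha)).trans (hv'_le a le_rfl)
  set w : ℝ → ℝ := fun x => v x + 2 * C * x ^ (-(1 : ℝ) / 2)
  have hw : ∀ x, 0 < x → HasDerivAt w (v' x - C * x ^ (-((3 : ℝ) / 2))) x := by
    intro x hx
    refine ((hv x hx).add ((Real.hasDerivAt_rpow_const (p := -(1 : ℝ) / 2)
      (Or.inl hx.ne')).const_mul (2 * C))).congr_deriv ?_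
    norm_num
    ring
  have hv_mono : MonotoneOn v (Ioi 0) :=
    monotoneOn_of_hasDerivWithinAt_nonneg (f' := v') (convex_Ioi 0)
      (fun x hx => (hv x hx).continuousAt.continuousWithinAt)
      (fun x hx => (hv x (interior_subset hx)).hasDerivWithinAt)
      (fun x hx => hv'_nonneg x (interior_subset hx))
  have hw_anti : AntitoneOn w (Ici a) := by
    refine antitoneOn_of_hasDerivWithinAt_nonpos (convex_Ici a)
      (fun x hx => (hw x (ha.trans_le hx)).continuousAt.continuousWithinAt)
      (fun x hx => (hw x (ha.trans_le (interior_subset hx))).hasDerivWithinAt) (fun x hx => ?_)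
    have hax : a ≤ x := interior_subset hx
    have hx₀ : 0 < x := ha.trans_le hax
    have hbound := hv'_le x hax
    rw [Real.rpow_neg hx₀.le, ← div_eq_mul_inv, sub_nonpos, le_div_iff₀ (by positivity)]
    linarith
  refine ⟨w a, ?_⟩
  rintro _ ⟨x, hx, rfl⟩
  rcases le_total x a with hxa | hax
  · calc v x ≤ v a := hv_mono hx ha hxa
      _ ≤ w a := le_add_of_nonneg_right (by positivity)
  · have hx₀ : 0 < x := hx
    calc v x ≤ w x := le_add_of_nonneg_right (by positivity)
      _ ≤ w a := hw_anti (mem_Ici.mpr le_rfl) hax hax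

lemma tendsto_sqrt_of_sq_add_mul_eq {α : Type*} {l : Filter α} {q B c : α → ℝ} {K L : ℝ}
    (hq : ∀ᶠ x in l, 0 ≤ q x ∧ q x ≤ K) (heq : ∀ᶠ x in l, q x ^ 2 + B x * q x = c x)
    (hB : Tendsto B l (𝓝 0)) (hc : Tendsto c l (𝓝 L)) : Tendsto q l (𝓝 √L) := by
  have hBq : Tendsto (fun x => B x * q x) l (𝓝 0) :=
    hB.zero_mul_isBoundedUnder_le <| isBoundedUnder_of_eventually_le (a := K) <|
      hq.mono fun x hx => by simpa [abs_of_nonneg hx.1] using hx.2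
  have hq_sq : Tendsto (fun x => q x ^ 2) l (𝓝 L) := by
    simpa using (hc.sub hBq).congr' (heq.mono fun x hx => by linarith)
  exact hq_sq.sqrt.congr' (hq.mono fun x hx => Real.sqrt_sq hx.1)

lemma tendsto_div_atTop_zero_of_abs_le {f : ℝ → ℝ} {M : ℝ} (hf : ∀ x, 0 < x → |f x| ≤ M) :
    Tendsto (fun x => f x / x) atTop (𝓝 0) := by
  simpa only [div_eq_mul_inv] using isBoundedUnder_le_mul_tendsto_zero
    (isBoundedUnder_of_eventually_le ((eventually_gt_atTop 0).mono hf)) tendsto_inv_atTop_zero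

/-- Minus the coefficient of `γ² v'(γ)` in the HJB equation, i.e. `-f(γ, 0) / γ²`. -/
noncomputable def hjbCoeff (lam σ₁ σ₂ γ : ℝ) : ℝ := 1 / σ₁ ^ 2 + 2 * lam / γ - σ₂ ^ 2 / γ ^ 2

lemma tendsto_hjbCoeff (lam σ₁ σ₂ : ℝ) :
    Tendsto (hjbCoeff lam σ₁ σ₂) atTop (𝓝 (1 / σ₁ ^ 2)) := by
  have h₁ : Tendsto (fun γ : ℝ => 2 * lam / γ) atTop (𝓝 0) :=
    tendsto_const_nhds.div_atTop tendsto_id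
  have h₂ : Tendsto (fun γ : ℝ => σ₂ ^ 2 / γ ^ 2) atTop (𝓝 0) :=
    tendsto_const_nhds.div_atTop (tendsto_pow_atTop two_ne_zero)
  have h := ((tendsto_const_nhds (x := 1 / σ₁ ^ 2)).add h₁).sub h₂
  rwa [add_zero, sub_zero] at h

lemma tendsto_hjbCoeff_div_sqrt (lam σ₁ σ₂ : ℝ) :
    Tendsto (fun γ => hjbCoeff lam σ₁ σ₂ γ / √γ) atTop (𝓝 0) := by
  simpa [div_eq_mul_inv] using (tendsto_hjbCoeff lam σ₁ σ₂).mul tendsto_sqrt_atTop.inv_tendsto_atTop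

lemma eventually_hjbCoeff_nonneg (lam : ℝ) {σ₁ : ℝ} (σ₂ : ℝ) (hσ₁ : σ₁ ≠ 0) :
    ∀ᶠ γ in atTop, 0 ≤ hjbCoeff lam σ₁ σ₂ γ :=
  (tendsto_hjbCoeff lam σ₁ σ₂).eventually (eventually_ge_nhds (by positivity))

lemma hjb_rescaled {ζ abar δ lam σ₁ σ₂ γ p y : ℝ} (hζ : ζ ≠ 0) (hγ : 0 < γ)
    (h : 0 = -(1 / (4 * ζ)) * γ ^ 4 * p ^ 2 +
        (-(1 / σ₁ ^ 2) - 2 * lam / γ + σ₂ ^ 2 / γ ^ 2) * (γ ^ 2 * p) + abar * γ - δ * y) :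
    (γ ^ ((3 : ℝ) / 2) * p) ^ 2 + 4 * ζ * (hjbCoeff lam σ₁ σ₂ γ / √γ) * (γ ^ ((3 : ℝ) / 2) * p) =
      4 * ζ * (abar - δ * (y / γ)) := by
  obtain ⟨r, hr, rfl⟩ : ∃ r, 0 < r ∧ γ = r ^ 2 := ⟨√γ, sqrt_pos.mpr hγ, (sq_sqrt hγ.le).symm⟩
  rw [rpow_three_halves_eq_mul_sqrt hγ.le, Real.sqrt_sq hr.le, hjbCoeff]
  field_simp at h ⊢
  linear_combination h

lemma tendsto_feedback_div_rpow_half {ζ abar : ℝ} {v' : ℝ → ℝ} (hζ : 0 < ζ)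
    (h : Tendsto (fun γ => γ ^ ((3 : ℝ) / 2) * v' γ) atTop (𝓝 (2 * √(ζ * abar)))) :
    Tendsto (fun γ => (γ ^ 2 * v' γ / (2 * ζ)) / γ ^ ((1 : ℝ) / 2)) atTop
      (𝓝 (√abar / √ζ)) := by
  have hlim : 2 * √(ζ * abar) / (2 * ζ) = √abar / √ζ := by
    have : √ζ ≠ 0 := (Real.sqrt_pos.mpr hζ).ne'
    rw [Real.sqrt_mul hζ.le]
    field_simp
    rw [Real.sq_sqrt hζ.le, mul_comm]
  rw [← hlim]
  refine (h.div_const (2 * ζ)).congr' ?_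
  filter_upwards [eventually_gt_atTop 0] with γ hγ
  obtain ⟨r, hr, rfl⟩ : ∃ r, 0 < r ∧ γ = r ^ 2 := ⟨√γ, sqrt_pos.mpr hγ, (sq_sqrt hγ.le).symm⟩
  rw [rpow_three_halves_eq_mul_sqrt hγ.le, ← Real.sqrt_eq_rpow, Real.sqrt_sq hr.le]
  field_simp

theorem stmt_19_general (ζ abar δ lam σ₁ σ₂ : ℝ)
    (hζ : 0 < ζ) (hδ : 0 < δ)
    (hσ₁ : 0 < σ₁)
    (v v' : ℝ → ℝ)
    (hv_nonneg : ∀ γ : ℝ, 0 < γ → 0 ≤ v γ)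
    (hv_deriv : ∀ γ : ℝ, 0 < γ → HasDerivAt v (v' γ) γ)
    (hv'_pos : ∀ γ : ℝ, 0 < γ → 0 < v' γ)
    (hHJB : ∀ γ : ℝ, 0 < γ →
      0 = -(1 / (4 * ζ)) * γ ^ 4 * v' γ ^ 2 +
        (-(1 / σ₁ ^ 2) - 2 * lam / γ + σ₂ ^ 2 / γ ^ 2) * (γ ^ 2 * v' γ) +
        abar * γ - δ * v γ) :
    (∃ M : ℝ, ∀ γ : ℝ, 0 < γ → |v γ| ≤ M) ∧
    Filter.Tendsto (fun γ : ℝ => γ ^ ((3 : ℝ) / 2) * v' γ) Filter.atTop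
      (nhds (2 * Real.sqrt (ζ * abar))) ∧
    Filter.Tendsto (fun γ : ℝ => (γ ^ 2 * v' γ / (2 * ζ)) / γ ^ ((1 : ℝ) / 2))
      Filter.atTop (nhds (Real.sqrt abar / Real.sqrt ζ)) := by
  set q : ℝ → ℝ := fun γ => γ ^ ((3 : ℝ) / 2) * v' γ
  set B : ℝ → ℝ := fun γ => 4 * ζ * (hjbCoeff lam σ₁ σ₂ γ / √γ)
  have hq_nonneg : ∀ γ, 0 < γ → 0 ≤ q γ := fun γ hγ => by
    have := hv'_pos γ hγ
    positivity
  have hrescaled : ∀ γ, 0 < γ → q γ ^ 2 + B γ * q γ = 4 * ζ * (abar - δ * (v γ / γ)) :=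
    fun γ hγ => hjb_rescaled hζ.ne' hγ (hHJB γ hγ)
  have hq_le : ∀ᶠ γ in atTop, 0 < γ ∧ q γ ≤ √(4 * ζ * abar) := by
    filter_upwards [eventually_hjbCoeff_nonneg lam σ₂ hσ₁.ne', eventually_gt_atTop 0] with γ hA hγ
    refine ⟨hγ, (le_abs_self _).trans (Real.abs_le_sqrt ?_)⟩
    have : 0 ≤ B γ * q γ := by have := hq_nonneg γ hγ; positivity
    have : 0 ≤ δ * (v γ / γ) := by have := hv_nonneg γ hγ; positivity
    nlinarith [hrescaled γ hγ]
  obtain ⟨a, ha⟩ := eventually_atTop.mp hq_le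
  obtain ⟨M, hM⟩ := bddAbove_image_Ioi_of_rpow_mul_deriv_le (ha a le_rfl).1 hv_deriv
    (fun γ hγ => (hv'_pos γ hγ).le) (fun γ hγ => (ha γ hγ).2)
  have hv_bdd : ∀ γ, 0 < γ → |v γ| ≤ M := fun γ hγ =>
    (abs_of_nonneg (hv_nonneg γ hγ)).trans_le (hM (mem_image_of_mem v hγ))
  have hB : Tendsto B atTop (𝓝 0) := by
    simpa using (tendsto_hjbCoeff_div_sqrt lam σ₁ σ₂).const_mul (4 * ζ)
  have hc : Tendsto (fun γ => 4 * ζ * (abar - δ * (v γ / γ))) atTop (𝓝 (4 * ζ * (abar - δ * 0))) :=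
    (((tendsto_div_atTop_zero_of_abs_le hv_bdd).const_mul δ).const_sub abar).const_mul (4 * ζ)
  have hq_lim : Tendsto q atTop (𝓝 (2 * √(ζ * abar))) := by
    have := tendsto_sqrt_of_sq_add_mul_eq (hq_le.mono fun γ hγ => ⟨hq_nonneg γ hγ.1, hγ.2⟩)
      ((eventually_gt_atTop 0).mono hrescaled) hB hc
    rwa [mul_zero, sub_zero, mul_assoc, Real.sqrt_mul zero_le_four, show √(4 : ℝ) = 2 by norm_num]
      at this
  exact ⟨⟨M, hv_bdd⟩, hq_lim, tendsto_feedback_div_rpow_half hζ hq_lim⟩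

/-- Quadratic-cost asymptotics. If v > 0-differentiable with v' > 0
solves the HJB equation
0 = −(1/(4ζ))γ⁴v'(γ)² + (−σ̄₁² − 2λ/γ + σ₂²/γ²)γ²v'(γ) + āγ − δv(γ) on (0,∞),
then v is bounded, γ^{3/2}v'(γ) → 2√(ζā) as γ → ∞, and the feedback map
H*(γ) = γ²v'(γ)/(2ζ) satisfies H*(γ)/γ^{1/2} → √ā/√ζ as γ → ∞. -/
theorem stmt_19 (ζ abar δ lam σ₁ σ₂ : ℝ)
    (hζ : 0 < ζ) (habar : 0 < abar) (hδ : 0 < δ) (hlam : 0 ≤ lam)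
    (hσ₁ : 0 < σ₁) (hσ₂ : 0 ≤ σ₂)
    (v v' : ℝ → ℝ)
    (hv_nonneg : ∀ γ : ℝ, 0 < γ → 0 ≤ v γ)
    (hv_deriv : ∀ γ : ℝ, 0 < γ → HasDerivAt v (v' γ) γ)
    (hv'_pos : ∀ γ : ℝ, 0 < γ → 0 < v' γ)
    (hHJB : ∀ γ : ℝ, 0 < γ →
      0 = -(1 / (4 * ζ)) * γ ^ 4 * v' γ ^ 2 +
        (-(1 / σ₁ ^ 2) - 2 * lam / γ + σ₂ ^ 2 / γ ^ 2) * (γ ^ 2 * v' γ) +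
        abar * γ - δ * v γ) :
    (∃ M : ℝ, ∀ γ : ℝ, 0 < γ → |v γ| ≤ M) ∧
    Filter.Tendsto (fun γ : ℝ => γ ^ ((3 : ℝ) / 2) * v' γ) Filter.atTop
      (nhds (2 * Real.sqrt (ζ * abar))) ∧
    Filter.Tendsto (fun γ : ℝ => (γ ^ 2 * v' γ / (2 * ζ)) / γ ^ ((1 : ℝ) / 2))
      Filter.atTop (nhds (Real.sqrt abar / Real.sqrt ζ)) :=
  stmt_19_general ζ abar δ lam σ₁ σ₂ hζ hδ hσ₁ v v' hv_nonneg hv_deriv hv'_pos hHJB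
end
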